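/- arXiv:1304.0036 — 6 statements merged into one kernel-verified Lean document; each statement's English description precedes it below -/
import Mathlib

section
/- Let d ≥ 2 be an integer and let Δ ∈ [-log d, log d]. Then there exist s, r ∈ [0,(d-1)/d] attaining the infimum defining M(Δ,d) (i.e. H₂(s) - H₂(r) + (s-r)·log(d-1) = Δ and D₂(s‖r) = M(Δ,d)), and the probability vectors σ = (1-s, s/(d-1), …, s/(d-1)) and ρ = (1-r, r/(d-1), …, r/(d-1)) on Fin d satisfy H(σ) - H(ρ) = Δ and D(σ‖ρ) = M(Δ,d). -/
/-! The constraint depends on `(s, r)` only through the `d`-ary entropy `qaryEntropy d`, which is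
continuous and runs from `0` to `log d` on `[0, (d-1)/d]`; so the feasible set is compact and, by
the intermediate value theorem, nonempty. The binary relative entropy `D₂(x‖y)` is lower
semicontinuous on `[0,1] × [0,1)`: it is continuous where `0 < y < 1`, it tends to `∞` as `y → 0`
with `x > 0` because it dominates `-x log y - 1`, and it vanishes at `(0, 0)`. Hence it attains its
infimum on the feasible set. For the vectors `σ`, `ρ` the `d - 1` equal coordinates contribute
`s log(s/r)` together, so `H(σ) = qaryEntropy d s` and `D(σ‖ρ) = D₂(s‖r)`. -/

open scoped ENNReal BigOperators

noncomputable section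

/-- Binary entropy (natural log), with Lean's convention `Real.log 0 = 0`. -/
def binEntropy' (x : ℝ) : ℝ := -(x * Real.log x) - (1 - x) * Real.log (1 - x)

/-- Binary relative entropy, valued in `[0,∞]`. -/
def binRelEntropy (x y : ℝ) : ℝ≥0∞ :=
  if (y = 0 ∧ 0 < x) ∨ (y = 1 ∧ x < 1) then ⊤
  else ENNReal.ofReal (x * Real.log (x / y) + (1 - x) * Real.log ((1 - x) / (1 - y)))

/-- `M(Δ,d)`: infimum of binary relative entropies under the entropy-difference constraint. -/
def Mfun (Δ : ℝ) (d : ℕ) : ℝ≥0∞ :=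
  sInf {m : ℝ≥0∞ | ∃ s r : ℝ, s ∈ Set.Icc (0:ℝ) (((d:ℝ) - 1) / d) ∧
    r ∈ Set.Icc (0:ℝ) (((d:ℝ) - 1) / d) ∧
    binEntropy' s - binEntropy' r + (s - r) * Real.log ((d:ℝ) - 1) = Δ ∧
    m = binRelEntropy s r}

/-- Shannon entropy of a probability vector on `Fin d` (natural log). -/
def shEntropy {d : ℕ} (p : Fin d → ℝ) : ℝ := ∑ i, -(p i * Real.log (p i))

/-- Relative entropy between probability vectors on `Fin d`, valued in `[0,∞]`. -/
def relEntropy {d : ℕ} (p q : Fin d → ℝ) : ℝ≥0∞ :=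
  if ∀ i, q i = 0 → p i = 0
  then ENNReal.ofReal (∑ i, p i * Real.log (p i / q i))
  else ⊤

/-- `N(d) = sup_{0<r<1/2} r(1-r) (log(((1-r)/r)(d-1)))²`. -/
def Nfun (d : ℕ) : ℝ :=
  sSup {v : ℝ | ∃ r : ℝ, 0 < r ∧ r < 1/2 ∧
    v = r * (1 - r) * (Real.log ((1 - r) / r * ((d:ℝ) - 1)))^2}

open Real Set Filter Topology

lemma binEntropy'_eq_binEntropy (x : ℝ) : binEntropy' x = binEntropy x := by
  rw [binEntropy', binEntropy_eq_negMulLog_add_negMulLog_one_sub, negMulLog, negMulLog]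
  ring

lemma qaryEntropy_eq_binEntropy'_add (d : ℕ) (x : ℝ) :
    qaryEntropy d x = binEntropy' x + x * log ((d : ℝ) - 1) := by
  rw [qaryEntropy, binEntropy'_eq_binEntropy]
  push_cast
  ring

lemma qaryEntropy_natCast_sub_one_div (d : ℕ) : qaryEntropy d (((d : ℝ) - 1) / d) = log d := by
  rcases eq_or_ne (d : ℝ) 0 with hd | hd
  · simp [hd]
  rcases eq_or_ne ((d : ℝ) - 1) 0 with hd1 | hd1
  · simp [show (d : ℝ) = 1 by linarith]
  have h1 : 1 - ((d : ℝ) - 1) / d = 1 / d := by field_simp; ring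
  rw [qaryEntropy_eq_binEntropy'_add, binEntropy', h1, log_div hd1 hd, log_div one_ne_zero hd,
    log_one]
  field_simp
  ring

lemma Fin.sum_ite_val_eq_zero {M : Type*} [AddCommMonoid M] (m : ℕ) (a b : M) :
    ∑ i : Fin (m + 1), (if (i : ℕ) = 0 then a else b) = a + m • b := by
  simp [Fin.sum_univ_succ]

lemma shEntropy_ite {d : ℕ} (hd : 2 ≤ d) (s : ℝ) :
    shEntropy (fun i : Fin d => if (i : ℕ) = 0 then 1 - s else s / ((d : ℝ) - 1)) =
      qaryEntropy d s := by
  obtain ⟨m, rfl⟩ : ∃ m, d = m + 1 := ⟨d - 1, by omega⟩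
  have hm : (m : ℝ) ≠ 0 := by norm_cast; omega
  simp only [shEntropy, apply_ite (fun x => -(x * log x)), Fin.sum_ite_val_eq_zero,
    qaryEntropy_eq_binEntropy'_add, binEntropy', nsmul_eq_mul]
  push_cast
  rw [add_sub_cancel_right]
  rcases eq_or_ne s 0 with rfl | hs
  · simp
  rw [log_div hs hm]
  field_simp
  ring

lemma relEntropy_ite {d : ℕ} (hd : 2 ≤ d) {s : ℝ} (hs : s ∈ Icc 0 1) (r : ℝ) :
    relEntropy (fun i : Fin d => if (i : ℕ) = 0 then 1 - s else s / ((d : ℝ) - 1))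
      (fun i : Fin d => if (i : ℕ) = 0 then 1 - r else r / ((d : ℝ) - 1)) =
      binRelEntropy s r := by
  obtain ⟨m, rfl⟩ : ∃ m, d = m + 1 := ⟨d - 1, by omega⟩
  have hm : (m : ℝ) ≠ 0 := by norm_cast; omega
  have : Nonempty (Fin m) := ⟨⟨0, by omega⟩⟩
  have hsupp : (∀ i : Fin (m + 1),
      (if (i : ℕ) = 0 then 1 - r else r / (((m + 1 : ℕ) : ℝ) - 1)) = 0 →
        (if (i : ℕ) = 0 then 1 - s else s / (((m + 1 : ℕ) : ℝ) - 1)) = 0) ↔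
      ¬((r = 0 ∧ 0 < s) ∨ (r = 1 ∧ s < 1)) := by
    simp only [Fin.forall_fin_succ, Fin.val_zero, Fin.val_succ, if_pos, Nat.succ_ne_zero,
      if_false, forall_const]
    push_cast
    simp only [add_sub_cancel_right, div_eq_zero_iff, hm, or_false]
    grind
  rw [relEntropy, binRelEntropy]
  by_cases h : (r = 0 ∧ 0 < s) ∨ (r = 1 ∧ s < 1)
  · rw [if_neg (hsupp.not.mpr (not_not.mpr h)), if_pos h]
  rw [if_pos (hsupp.mpr h), if_neg h, Fin.sum_univ_succ]
  simp only [Fin.val_zero, Fin.val_succ, if_pos, Nat.succ_ne_zero, if_false,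
    Finset.sum_const, Finset.card_univ, Fintype.card_fin, nsmul_eq_mul]
  push_cast
  rw [add_sub_cancel_right, div_div_div_cancel_right₀ hm, ← mul_assoc, mul_div_cancel₀ _ hm,
    add_comm]

lemma mul_log_div (x : ℝ) {y : ℝ} (hy : y ≠ 0) : x * log (x / y) = x * log x - x * log y := by
  rcases eq_or_ne x 0 with rfl | hx
  · simp
  rw [log_div hx hy]
  ring

lemma binRelEntropy_eq_ofReal {x y : ℝ} (hy : y ∈ Ioo 0 1) :
    binRelEntropy x y = ENNReal.ofReal (-binEntropy x - x * log y - (1 - x) * log (1 - y)) := by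
  rw [binRelEntropy, if_neg (by rintro (⟨h, -⟩ | ⟨h, -⟩) <;> linarith [hy.1, hy.2]),
    mul_log_div _ hy.1.ne', mul_log_div _ (by linarith [hy.2] : 1 - y ≠ 0),
    binEntropy_eq_negMulLog_add_negMulLog_one_sub, negMulLog, negMulLog]
  congr 1
  ring

lemma ofReal_neg_mul_log_sub_one_le_binRelEntropy {x y : ℝ} (hx : x ∈ Icc 0 1)
    (hy : y ∈ Ioo 0 1) : ENNReal.ofReal (-(x * log y) - 1) ≤ binRelEntropy x y := by
  rw [binRelEntropy_eq_ofReal hy]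
  refine ENNReal.ofReal_le_ofReal ?_
  have hH : binEntropy x < 1 := binEntropy_le_log_two.trans_lt (by linarith [log_two_lt_d9])
  have hlog : (1 - x) * log (1 - y) ≤ 0 := mul_nonpos_of_nonneg_of_nonpos
    (by linarith [hx.2]) (log_nonpos (by linarith [hy.2]) (by linarith [hy.1]))
  linarith

lemma continuousAt_binRelEntropy {x y : ℝ} (hy : y ∈ Ioo 0 1) :
    ContinuousAt (fun p : ℝ × ℝ => binRelEntropy p.1 p.2) (x, y) := by
  have hev : (fun p : ℝ × ℝ => binRelEntropy p.1 p.2) =ᶠ[𝓝 (x, y)] fun p =>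
      ENNReal.ofReal (-binEntropy p.1 - p.1 * log p.2 - (1 - p.1) * log (1 - p.2)) := by
    filter_upwards [continuous_snd.continuousAt.preimage_mem_nhds (isOpen_Ioo.mem_nhds hy)]
      with p hp using binRelEntropy_eq_ofReal hp
  refine ContinuousAt.congr ?_ hev.symm
  have : y ≠ 0 := hy.1.ne'
  have : 1 - y ≠ 0 := by linarith [hy.2]
  exact ENNReal.continuous_ofReal.continuousAt.comp (by fun_prop (disch := assumption))

lemma tendsto_binRelEntropy_zero_right {x : ℝ} (hx : 0 < x) :
    Tendsto (fun p : ℝ × ℝ => binRelEntropy p.1 p.2) (𝓝[Icc 0 1 ×ˢ Ico 0 1] (x, 0)) (𝓝 ⊤) := by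
  set S : Set (ℝ × ℝ) := Icc 0 1 ×ˢ Ico 0 1
  have hsplit : S ⊆ (S ∩ {p | p.2 = 0}) ∪ (S ∩ {p | 0 < p.2}) := fun p hp =>
    hp.2.1.eq_or_lt.elim (fun h => Or.inl ⟨hp, h.symm⟩) (fun h => Or.inr ⟨hp, h⟩)
  refine Tendsto.mono_left ?_ (nhdsWithin_mono _ hsplit)
  rw [nhdsWithin_union]
  have hfst : ∀ T : Set (ℝ × ℝ), Tendsto Prod.fst (𝓝[T] (x, 0)) (𝓝 x) := fun T =>
    tendsto_nhdsWithin_of_tendsto_nhds continuous_fst.continuousAt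
  refine Tendsto.sup ?_ ?_
  · refine tendsto_const_nhds.congr' ?_
    filter_upwards [(hfst _).eventually (lt_mem_nhds hx), self_mem_nhdsWithin] with p hp hpS
    rw [hpS.2, binRelEntropy, if_pos (Or.inl ⟨rfl, hp⟩)]
  · have hsnd : Tendsto Prod.snd (𝓝[S ∩ {p | 0 < p.2}] (x, 0)) (𝓝[>] 0) :=
      tendsto_nhdsWithin_iff.mpr ⟨tendsto_nhdsWithin_of_tendsto_nhds
        continuous_snd.continuousAt, eventually_mem_nhdsWithin.mono fun p hp => hp.2⟩
    have hbound : Tendsto (fun p : ℝ × ℝ => -(p.1 * log p.2) - 1)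
        (𝓝[S ∩ {p | 0 < p.2}] (x, 0)) atTop := by
      have := (hfst _).pos_mul_atTop hx (tendsto_neg_atBot_atTop.comp
        (tendsto_log_nhdsGT_zero.comp hsnd))
      exact (tendsto_atTop_add_const_right _ (-1) this).congr fun p => by
        simp only [Function.comp_apply]; ring
    refine tendsto_nhds_top_mono (ENNReal.tendsto_ofReal_atTop.comp hbound) ?_
    filter_upwards [self_mem_nhdsWithin] with p ⟨⟨⟨hp1, hp1'⟩, _, hp2'⟩, hp2⟩
    exact ofReal_neg_mul_log_sub_one_le_binRelEntropy ⟨hp1, hp1'⟩ ⟨hp2, hp2'⟩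

lemma lowerSemicontinuousOn_binRelEntropy :
    LowerSemicontinuousOn (fun p : ℝ × ℝ => binRelEntropy p.1 p.2) (Icc 0 1 ×ˢ Ico 0 1) := by
  rintro ⟨x, y⟩ ⟨⟨hx0, -⟩, hy0, hy1⟩
  rcases hy0.eq_or_lt with rfl | hy0
  · rcases hx0.eq_or_lt with rfl | hx0
    · intro c hc
      simp [binRelEntropy] at hc
    · refine ContinuousWithinAt.lowerSemicontinuousWithinAt ?_
      rw [ContinuousWithinAt, binRelEntropy, if_pos (Or.inl ⟨rfl, hx0⟩)]
      exact tendsto_binRelEntropy_zero_right hx0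
  · exact (continuousAt_binRelEntropy ⟨hy0, hy1⟩).continuousWithinAt.lowerSemicontinuousWithinAt

lemma exists_mem_Icc_qaryEntropy_sub_eq {d : ℕ} (hd : 1 ≤ d) {Δ : ℝ}
    (hΔ : Δ ∈ Icc (-log d) (log d)) :
    ∃ p ∈ Icc 0 (((d : ℝ) - 1) / d) ×ˢ Icc 0 (((d : ℝ) - 1) / d),
      qaryEntropy d p.1 - qaryEntropy d p.2 = Δ := by
  have ha : (0 : ℝ) ≤ ((d : ℝ) - 1) / d :=
    div_nonneg (by simpa using (Nat.one_le_cast (α := ℝ)).mpr hd) (Nat.cast_nonneg d)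
  have hrange : Icc 0 (log d) ⊆ qaryEntropy d '' Icc 0 (((d : ℝ) - 1) / d) := by
    simpa only [qaryEntropy_zero, qaryEntropy_natCast_sub_one_div] using
      intermediate_value_Icc ha (qaryEntropy_continuous (q := d)).continuousOn
  rcases le_total 0 Δ with h | h
  · obtain ⟨s, hs, hsΔ⟩ := hrange ⟨h, hΔ.2⟩
    exact ⟨(s, 0), ⟨hs, left_mem_Icc.mpr ha⟩, by simp [hsΔ]⟩
  · obtain ⟨r, hr, hrΔ⟩ := hrange ⟨neg_nonneg.mpr h, neg_le.mp hΔ.1⟩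
    exact ⟨(0, r), ⟨left_mem_Icc.mpr ha, hr⟩, by simp [hrΔ]⟩

/-- the infimum defining `M(Δ,d)` is attained, by states of the special form. -/
theorem Mfun_attained (d : ℕ) (hd : 2 ≤ d) (Δ : ℝ)
    (hΔ : Δ ∈ Set.Icc (-Real.log d) (Real.log d)) :
    ∃ s r : ℝ, s ∈ Set.Icc (0:ℝ) (((d:ℝ) - 1) / d) ∧ r ∈ Set.Icc (0:ℝ) (((d:ℝ) - 1) / d) ∧
      binEntropy' s - binEntropy' r + (s - r) * Real.log ((d:ℝ) - 1) = Δ ∧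
      binRelEntropy s r = Mfun Δ d ∧
      shEntropy (fun i : Fin d => if (i : ℕ) = 0 then 1 - s else s / ((d:ℝ) - 1)) -
        shEntropy (fun i : Fin d => if (i : ℕ) = 0 then 1 - r else r / ((d:ℝ) - 1)) = Δ ∧
      relEntropy (fun i : Fin d => if (i : ℕ) = 0 then 1 - s else s / ((d:ℝ) - 1))
        (fun i : Fin d => if (i : ℕ) = 0 then 1 - r else r / ((d:ℝ) - 1)) = Mfun Δ d := by
  set a : ℝ := ((d : ℝ) - 1) / d
  have ha : a < 1 := (div_lt_one (by positivity)).mpr (by linarith)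
  have hconstr (s r : ℝ) : binEntropy' s - binEntropy' r + (s - r) * log ((d : ℝ) - 1) =
      qaryEntropy d s - qaryEntropy d r := by
    simp only [qaryEntropy_eq_binEntropy'_add]; ring
  set K := {p ∈ Icc 0 a ×ˢ Icc 0 a | qaryEntropy d p.1 - qaryEntropy d p.2 = Δ}
  have hK : IsCompact K :=
    (isCompact_Icc.prod isCompact_Icc).inter_right (isClosed_eq (by fun_prop) continuous_const)
  have hlsc : LowerSemicontinuousOn (fun p : ℝ × ℝ => binRelEntropy p.1 p.2) K :=
    lowerSemicontinuousOn_binRelEntropy.mono fun p hp =>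
      ⟨⟨hp.1.1.1, hp.1.1.2.trans ha.le⟩, hp.1.2.1, hp.1.2.2.trans_lt ha⟩
  obtain ⟨⟨s, r⟩, ⟨⟨hs, hr⟩, hsr⟩, hmin⟩ :=
    hlsc.exists_isMinOn (exists_mem_Icc_qaryEntropy_sub_eq (by omega) hΔ) hK
  have hM : binRelEntropy s r = Mfun Δ d := by
    refine le_antisymm (le_sInf ?_) (sInf_le ⟨s, r, hs, hr, (hconstr s r).trans hsr, rfl⟩)
    rintro _ ⟨s', r', hs', hr', h, rfl⟩
    exact isMinOn_iff.mp hmin (s', r') ⟨⟨hs', hr'⟩, (hconstr s' r').symm.trans h⟩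
  refine ⟨s, r, hs, hr, (hconstr s r).trans hsr, hM, ?_, ?_⟩
  · rw [shEntropy_ite hd, shEntropy_ite hd, hsr]
  · rw [relEntropy_ite hd ⟨hs.1, hs.2.trans ha.le⟩, hM]

end
end

section
/- Let d ≥ 2 be an integer and let N be a real number with N ≥ N(d). Then for every Δ ∈ [-log d, log d], M(Δ,d) ≥ N·(exp(Δ/N) - 1 - Δ/N). -/
/-!
With `L = log ((1 - r) / r * (d - 1))`, the constraint reads `Δ = (s - r) L - D(s‖r)`.
The Donsker–Varadhan inequality for Bernoulli laws gives `λ (s - r) L ≤ D(s‖r) + K(λ)`,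
where `K` is the cumulant generating function of `L (X - r)` for `X ~ Bernoulli r`.
Its second derivative is `L² p (1 - p)` for the tilted parameter `p`, and since
`log ((1 - p) / p * (d - 1)) = (1 - λ) L`, this is at most `N(d) / (1 - λ)²`, the second
derivative of `N (-λ - log (1 - λ))`. Hence `K(λ) ≤ N (-λ - log (1 - λ))` for `λ < 1`,
and the choice `λ = 1 - exp (-Δ / N)` gives the bound.
-/

open scoped ENNReal BigOperators

noncomputable section

open Real Set Topology

-- the derivative of `r ↦ binEntropy' r + r * log (d - 1)`
def entropySlope (d : ℕ) (r : ℝ) : ℝ := log ((1 - r) / r * ((d : ℝ) - 1))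

def nfunTerm (d : ℕ) (r : ℝ) : ℝ := r * (1 - r) * entropySlope d r ^ 2

def binKL (s r : ℝ) : ℝ := s * log (s / r) + (1 - s) * log ((1 - s) / (1 - r))

def bernoulliMGF (r L x : ℝ) : ℝ := 1 - r + r * exp (L * x)

def bernoulliTilt (r L x : ℝ) : ℝ := r * exp (L * x) / bernoulliMGF r L x

def centeredBernoulliCGF (r L x : ℝ) : ℝ := log (bernoulliMGF r L x) - r * L * x

lemma isMinOn_of_hasDerivAt_eq_zero_of_deriv2_nonneg {D : Set ℝ} (hD : Convex ℝ D)
    (hDo : IsOpen D) {f f' f'' : ℝ → ℝ} {a : ℝ} (hf : ∀ x ∈ D, HasDerivAt f (f' x) x)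
    (hf' : ∀ x ∈ D, HasDerivAt f' (f'' x) x) (hf'' : ∀ x ∈ D, 0 ≤ f'' x) (ha : a ∈ D)
    (hfa : f' a = 0) : IsMinOn f D a := by
  have hconv : ConvexOn ℝ D f := by
    refine convexOn_of_hasDerivWithinAt2_nonneg (f' := f') (f'' := f'') hD
      (fun x hx => (hf x hx).continuousAt.continuousWithinAt) ?_ ?_ ?_ <;> rw [hDo.interior_eq]
    · exact fun x hx => (hf x hx).hasDerivWithinAt
    · exact fun x hx => (hf' x hx).hasDerivWithinAt
    · exact hf''
  refine hconv.isMinOn_of_rightDeriv_eq_zero (by rwa [hDo.interior_eq]) ?_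
  rw [(hf a ha).hasDerivWithinAt.derivWithin (uniqueDiffWithinAt_Ioi a), hfa]

lemma hasDerivAt_neg_sub_log_one_sub {x : ℝ} (hx : x < 1) :
    HasDerivAt (fun y => -y - log (1 - y)) (x / (1 - x)) x := by
  have h := (hasDerivAt_neg' x).sub (((hasDerivAt_id' x).const_sub 1).log (by linarith))
  refine h.congr_deriv ?_
  field_simp [(by linarith : 1 - x ≠ 0)]
  ring

lemma hasDerivAt_div_one_sub {x : ℝ} (hx : x < 1) :
    HasDerivAt (fun y => y / (1 - y)) (1 / (1 - x) ^ 2) x := by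
  have h := (hasDerivAt_id' x).div ((hasDerivAt_id' x).const_sub 1) (by linarith)
  refine h.congr_deriv ?_
  ring

section Nfun

variable {d : ℕ}

lemma one_le_natCast_sub_one (hd : 2 ≤ d) : (1 : ℝ) ≤ (d : ℝ) - 1 := by
  have : (2 : ℝ) ≤ d := by exact_mod_cast hd
  linarith

lemma bddAbove_nfunTerm (hd : 2 ≤ d) :
    BddAbove {v : ℝ | ∃ r : ℝ, 0 < r ∧ r < 1 / 2 ∧ v = nfunTerm d r} := by
  have hc := one_le_natCast_sub_one hd
  refine ⟨4 * ((d : ℝ) - 1), ?_⟩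
  rintro _ ⟨r, hr0, hr1, rfl⟩
  set y := (1 - r) / r * ((d : ℝ) - 1) with hy
  have hy1 : 1 ≤ y := by
    rw [hy, div_mul_eq_mul_div, le_div_iff₀ hr0]
    nlinarith
  have hlog : log y ≤ 2 * √y := by
    have := log_le_sub_one_of_pos (sqrt_pos.2 (by linarith : 0 < y))
    rw [log_sqrt (by linarith)] at this
    linarith
  have hsq : log y ^ 2 ≤ 4 * y := by
    nlinarith [log_nonneg hy1, sq_sqrt (by linarith : 0 ≤ y)]
  calc nfunTerm d r = r * (1 - r) * log y ^ 2 := rfl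
    _ ≤ r * (1 - r) * (4 * y) := by gcongr; nlinarith
    _ = 4 * (1 - r) ^ 2 * ((d : ℝ) - 1) := by rw [hy]; field_simp
    _ ≤ 4 * ((d : ℝ) - 1) := by
      have : (1 - r) ^ 2 ≤ 1 := by nlinarith
      nlinarith

lemma nfunTerm_le_Nfun_of_lt_half (hd : 2 ≤ d) {p : ℝ} (hp0 : 0 < p) (hp : p < 1 / 2) :
    nfunTerm d p ≤ Nfun d :=
  le_csSup (bddAbove_nfunTerm hd) ⟨p, hp0, hp, rfl⟩

lemma continuousAt_nfunTerm_half (hd : 2 ≤ d) : ContinuousAt (nfunTerm d) (1 / 2) := by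
  have hc := one_le_natCast_sub_one hd
  have harg : ContinuousAt (fun t : ℝ => (1 - t) / t * ((d : ℝ) - 1)) (1 / 2) :=
    (ContinuousAt.div (by fun_prop) (by fun_prop) (by norm_num)).mul continuousAt_const
  exact (by fun_prop : ContinuousAt (fun t : ℝ => t * (1 - t)) (1 / 2)).mul
    ((harg.log (by norm_num; linarith)).pow 2)

lemma nfunTerm_le_Nfun_of_le_half (hd : 2 ≤ d) {p : ℝ} (hp0 : 0 < p) (hp : p ≤ 1 / 2) :
    nfunTerm d p ≤ Nfun d := by
  rcases hp.lt_or_eq with hp | rfl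
  · exact nfunTerm_le_Nfun_of_lt_half hd hp0 hp
  refine le_of_tendsto (x := 𝓝[<] (1 / 2))
    ((continuousAt_nfunTerm_half hd).tendsto.mono_left nhdsWithin_le_nhds) ?_
  filter_upwards [Ioo_mem_nhdsLT (by norm_num : (0 : ℝ) < 1 / 2)] with t ht
  exact nfunTerm_le_Nfun_of_lt_half hd ht.1 ht.2

lemma nfunTerm_le_nfunTerm_one_sub (hd : 2 ≤ d) {p : ℝ} (hp : 1 / 2 ≤ p) (hp1 : p < 1) :
    nfunTerm d p ≤ nfunTerm d (1 - p) := by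
  have hc := one_le_natCast_sub_one hd
  have hp0 : 0 < p := by linarith
  have hq0 : 0 < 1 - p := by linarith
  -- `entropySlope` at `p` and at `1 - p` are `log (d - 1) ∓ ℓ` with `ℓ ≥ 0`
  set ℓ := log (p / (1 - p))
  have hℓ : 0 ≤ ℓ := log_nonneg (by rw [le_div_iff₀ hq0]; linarith)
  have hp' : entropySlope d p = log ((d : ℝ) - 1) - ℓ := by
    rw [entropySlope, log_mul (by positivity) (by linarith), ← inv_div, log_inv]
    ring
  have hq' : entropySlope d (1 - p) = log ((d : ℝ) - 1) + ℓ := by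
    rw [entropySlope, sub_sub_cancel, log_mul (by positivity) (by linarith)]
    ring
  rw [nfunTerm, nfunTerm, hp', hq', sub_sub_cancel]
  nlinarith [mul_nonneg (mul_pos hp0 hq0).le (mul_nonneg (log_nonneg hc) hℓ)]

lemma nfunTerm_le_Nfun (hd : 2 ≤ d) {p : ℝ} (hp0 : 0 < p) (hp1 : p < 1) :
    nfunTerm d p ≤ Nfun d := by
  rcases le_total p (1 / 2) with hp | hp
  · exact nfunTerm_le_Nfun_of_le_half hd hp0 hp
  · exact (nfunTerm_le_nfunTerm_one_sub hd hp hp1).trans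
      (nfunTerm_le_Nfun_of_le_half hd (by linarith) (by linarith))

end Nfun

section BinKL

lemma mul_log_div_eq_sub {s r : ℝ} (hr : r ≠ 0) : s * log (s / r) = s * log s - s * log r := by
  rcases eq_or_ne s 0 with rfl | hs
  · simp
  · rw [log_div hs hr]; ring

lemma binKL_eq {s r : ℝ} (hr0 : r ≠ 0) (hr1 : r ≠ 1) :
    binKL s r = s * log s + (1 - s) * log (1 - s) - s * log r - (1 - s) * log (1 - r) := by
  rw [binKL, mul_log_div_eq_sub hr0, mul_log_div_eq_sub (sub_ne_zero.2 hr1.symm)]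
  ring

lemma sub_le_mul_log_div {s q : ℝ} (hs : 0 ≤ s) (hq : 0 < q) : s - q ≤ s * log (s / q) := by
  rcases hs.eq_or_lt with rfl | hs
  · simpa using hq.le
  calc s - q = -(s * (q / s - 1)) := by field_simp; ring
    _ ≤ -(s * log (q / s)) :=
      neg_le_neg (mul_le_mul_of_nonneg_left (log_le_sub_one_of_pos (div_pos hq hs)) hs.le)
    _ = s * log (s / q) := by rw [← inv_div, log_inv]; ring

lemma binKL_nonneg {s q : ℝ} (hs0 : 0 ≤ s) (hs1 : s ≤ 1) (hq0 : 0 < q) (hq1 : q < 1) :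
    0 ≤ binKL s q := by
  have h₁ := sub_le_mul_log_div hs0 hq0
  have h₂ := sub_le_mul_log_div (sub_nonneg.2 hs1) (sub_pos.2 hq1)
  rw [binKL]
  linarith

end BinKL

section Bernoulli

variable {r : ℝ} (L : ℝ)

lemma bernoulliMGF_pos (hr0 : 0 < r) (hr1 : r < 1) (x : ℝ) : 0 < bernoulliMGF r L x :=
  add_pos (sub_pos.2 hr1) (mul_pos hr0 (exp_pos _))

lemma bernoulliMGF_zero : bernoulliMGF r L 0 = 1 := by
  simp [bernoulliMGF]

lemma hasDerivAt_bernoulliMGF (x : ℝ) :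
    HasDerivAt (bernoulliMGF r L) (r * L * exp (L * x)) x := by
  have h := (((hasDerivAt_id' x).const_mul L).exp.const_mul r).const_add (1 - r)
  exact h.congr_deriv (by ring)

lemma bernoulliTilt_pos (hr0 : 0 < r) (hr1 : r < 1) (x : ℝ) : 0 < bernoulliTilt r L x :=
  div_pos (mul_pos hr0 (exp_pos _)) (bernoulliMGF_pos L hr0 hr1 x)

lemma one_sub_bernoulliTilt (hr0 : 0 < r) (hr1 : r < 1) (x : ℝ) :
    1 - bernoulliTilt r L x = (1 - r) / bernoulliMGF r L x := by
  have := (bernoulliMGF_pos L hr0 hr1 x).ne'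
  rw [bernoulliTilt, eq_div_iff this, sub_mul, div_mul_cancel₀ _ this, bernoulliMGF]
  ring

lemma bernoulliTilt_lt_one (hr0 : 0 < r) (hr1 : r < 1) (x : ℝ) : bernoulliTilt r L x < 1 := by
  have := one_sub_bernoulliTilt L hr0 hr1 x
  have := div_pos (sub_pos.2 hr1) (bernoulliMGF_pos L hr0 hr1 x)
  linarith

lemma hasDerivAt_centeredBernoulliCGF (hr0 : 0 < r) (hr1 : r < 1) (x : ℝ) :
    HasDerivAt (centeredBernoulliCGF r L) (L * (bernoulliTilt r L x - r)) x := by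
  have h := ((hasDerivAt_bernoulliMGF L x).log (bernoulliMGF_pos L hr0 hr1 x).ne').sub
    ((hasDerivAt_id' x).const_mul (r * L))
  exact h.congr_deriv (by rw [bernoulliTilt]; ring)

lemma hasDerivAt_bernoulliTilt (hr0 : 0 < r) (hr1 : r < 1) (x : ℝ) :
    HasDerivAt (bernoulliTilt r L)
      (L * (bernoulliTilt r L x * (1 - bernoulliTilt r L x))) x := by
  have hM := bernoulliMGF_pos L hr0 hr1 x
  have h := (((hasDerivAt_id' x).const_mul L).exp.const_mul r).div
    (hasDerivAt_bernoulliMGF L x) hM.ne'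
  refine h.congr_deriv ?_
  rw [one_sub_bernoulliTilt L hr0 hr1, bernoulliTilt]
  field_simp
  rw [bernoulliMGF]
  ring

lemma entropySlope_bernoulliTilt {d : ℕ} (hd : 2 ≤ d) (hr0 : 0 < r) (hr1 : r < 1) (x : ℝ) :
    entropySlope d (bernoulliTilt r (entropySlope d r) x) = (1 - x) * entropySlope d r := by
  have hc := one_le_natCast_sub_one hd
  set L := entropySlope d r
  have hM := bernoulliMGF_pos L hr0 hr1 x
  have hq : (1 - bernoulliTilt r L x) / bernoulliTilt r L x * ((d : ℝ) - 1)
      = (1 - r) / r * ((d : ℝ) - 1) * exp (-(L * x)) := by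
    rw [one_sub_bernoulliTilt L hr0 hr1, bernoulliTilt, exp_neg]
    field_simp
  have hpos : 0 < (1 - r) / r * ((d : ℝ) - 1) := by
    have := sub_pos.2 hr1
    positivity
  rw [entropySlope, hq, log_mul hpos.ne' (exp_pos _).ne', log_exp]
  simp only [L, entropySlope]
  ring

end Bernoulli

section CGFBound

variable {d : ℕ} {r N : ℝ}

lemma bernoulliTilt_variance_le (hd : 2 ≤ d) (hr0 : 0 < r) (hr1 : r < 1) (hN : Nfun d ≤ N)
    {x : ℝ} (hx : x < 1) :
    entropySlope d r * (entropySlope d r * (bernoulliTilt r (entropySlope d r) x *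
      (1 - bernoulliTilt r (entropySlope d r) x))) ≤ N / (1 - x) ^ 2 := by
  set L := entropySlope d r
  set p := bernoulliTilt r L x
  have h := nfunTerm_le_Nfun hd (bernoulliTilt_pos L hr0 hr1 x) (bernoulliTilt_lt_one L hr0 hr1 x)
  rw [nfunTerm, entropySlope_bernoulliTilt hd hr0 hr1] at h
  rw [le_div_iff₀ (by nlinarith)]
  calc L * (L * (p * (1 - p))) * (1 - x) ^ 2 = p * (1 - p) * ((1 - x) * L) ^ 2 := by ring
    _ ≤ N := h.trans hN

lemma centeredBernoulliCGF_entropySlope_le (hd : 2 ≤ d) (hr0 : 0 < r) (hr1 : r < 1)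
    (hN : Nfun d ≤ N) {x : ℝ} (hx : x < 1) :
    centeredBernoulliCGF r (entropySlope d r) x ≤ N * (-x - log (1 - x)) := by
  set L := entropySlope d r
  have hmin : IsMinOn (fun y => N * (-y - log (1 - y)) - centeredBernoulliCGF r L y) (Iio 1) 0 :=
    isMinOn_of_hasDerivAt_eq_zero_of_deriv2_nonneg (convex_Iio 1) isOpen_Iio
      (fun y hy => ((hasDerivAt_neg_sub_log_one_sub hy).const_mul N).sub
        (hasDerivAt_centeredBernoulliCGF L hr0 hr1 y))
      (fun y hy => ((hasDerivAt_div_one_sub hy).const_mul N).sub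
        (((hasDerivAt_bernoulliTilt L hr0 hr1 y).sub_const r).const_mul L))
      (fun y hy => by
        have := bernoulliTilt_variance_le hd hr0 hr1 hN hy
        rw [mul_one_div]
        linarith)
      (by norm_num) (by simp [bernoulliTilt, bernoulliMGF_zero])
  have := isMinOn_iff.1 hmin x hx
  simp only [neg_zero, sub_zero, log_one, centeredBernoulliCGF, bernoulliMGF_zero, mul_zero] at this
  rw [centeredBernoulliCGF]
  linarith

end CGFBound

section Variational

variable {s r : ℝ}

lemma mul_le_binKL_add_centeredBernoulliCGF (hs0 : 0 ≤ s) (hs1 : s ≤ 1) (hr0 : 0 < r)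
    (hr1 : r < 1) (L x : ℝ) : (s - r) * L * x ≤ binKL s r + centeredBernoulliCGF r L x := by
  -- the defect is `binKL s (bernoulliTilt r L x) ≥ 0`
  have hM := bernoulliMGF_pos L hr0 hr1 x
  have hq0 := bernoulliTilt_pos L hr0 hr1 x
  have hq1 := bernoulliTilt_lt_one L hr0 hr1 x
  have hlogq : log (bernoulliTilt r L x) = log r + L * x - log (bernoulliMGF r L x) := by
    rw [bernoulliTilt, log_div (by positivity) hM.ne', log_mul hr0.ne' (exp_pos _).ne', log_exp]
  have hlogq' : log (1 - bernoulliTilt r L x) = log (1 - r) - log (bernoulliMGF r L x) := by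
    rw [one_sub_bernoulliTilt L hr0 hr1, log_div (by linarith) hM.ne']
  have h := binKL_nonneg hs0 hs1 hq0 hq1
  rw [binKL_eq hq0.ne' hq1.ne, hlogq, hlogq'] at h
  rw [binKL_eq hr0.ne' hr1.ne, centeredBernoulliCGF]
  linarith

lemma entropyGap_add_binKL {d : ℕ} (hd : 2 ≤ d) (hr0 : 0 < r) (hr1 : r < 1) :
    binEntropy' s - binEntropy' r + (s - r) * log ((d : ℝ) - 1) + binKL s r
      = (s - r) * entropySlope d r := by
  have hc := one_le_natCast_sub_one hd
  rw [binKL_eq hr0.ne' hr1.ne, entropySlope, log_mul (div_pos (by linarith) hr0).ne' (by linarith),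
    log_div (by linarith) hr0.ne', binEntropy', binEntropy']
  ring

lemma exp_bound_le_binKL {d : ℕ} {N Δ : ℝ} (hd : 2 ≤ d) (hN : Nfun d ≤ N) (hNpos : 0 < N)
    (hs0 : 0 ≤ s) (hs1 : s ≤ 1) (hr0 : 0 < r) (hr1 : r < 1)
    (hΔ : binEntropy' s - binEntropy' r + (s - r) * log ((d : ℝ) - 1) = Δ) :
    N * (exp (Δ / N) - 1 - Δ / N) ≤ binKL s r := by
  set D := binKL s r
  have hbound : ∀ t < 1, t * (Δ + D) ≤ D + N * (-t - log (1 - t)) := by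
    intro t ht
    have h₁ := mul_le_binKL_add_centeredBernoulliCGF hs0 hs1 hr0 hr1 (entropySlope d r) t
    have h₂ := centeredBernoulliCGF_entropySlope_le hd hr0 hr1 hN ht
    rw [← hΔ, entropyGap_add_binKL hd hr0 hr1]
    linarith
  set u := Δ / N
  have hΔu : Δ = N * u := by simp only [u]; field_simp
  have hexp : exp (-u) * exp u = 1 := by rw [← exp_add]; simp
  -- `t = 1 - exp (-u)` maximises `(t * Δ - N * (-t - log (1 - t))) / (1 - t)`
  have h := hbound (1 - exp (-u)) (by linarith [exp_pos (-u)])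
  rw [sub_sub_cancel, log_exp, hΔu] at h
  linear_combination (exp u) * h + (N * u + D + N) * hexp

end Variational

lemma binRelEntropy_eq_ofReal_binKL {s r : ℝ} (hr0 : 0 < r) (hr1 : r < 1) :
    binRelEntropy s r = ENNReal.ofReal (binKL s r) := by
  rw [binRelEntropy, if_neg (by rintro (⟨rfl, -⟩ | ⟨rfl, -⟩) <;> linarith), binKL]

theorem Mfun_ge_exp_bound_general (d : ℕ) (hd : 2 ≤ d) (N : ℝ) (hN : Nfun d ≤ N)
    (Δ : ℝ) :
    ENNReal.ofReal (N * (Real.exp (Δ / N) - 1 - Δ / N)) ≤ Mfun Δ d := by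
  rcases le_or_gt N 0 with hN0 | hNpos
  · rw [ENNReal.ofReal_of_nonpos
      (mul_nonpos_of_nonpos_of_nonneg hN0 (by linarith [add_one_le_exp (Δ / N)]))]
    exact zero_le
  refine le_sInf ?_
  rintro _ ⟨s, r, ⟨hs0, hs⟩, ⟨hr0, hr⟩, hΔ, rfl⟩
  have hd1 : ((d : ℝ) - 1) / d < 1 := by
    rw [div_lt_one (by positivity)]
    linarith
  rcases hr0.eq_or_lt with rfl | hr0
  · rcases hs0.eq_or_lt with rfl | hs0
    · simp [← hΔ, binEntropy']
    · simp [binRelEntropy, hs0]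
  rw [binRelEntropy_eq_ofReal_binKL hr0 (hr.trans_lt hd1)]
  exact ENNReal.ofReal_le_ofReal
    (exp_bound_le_binKL hd hN hNpos hs0 (hs.trans hd1.le) hr0 (hr.trans_lt hd1) hΔ)

/-- exponential-type lower bound on `M(Δ,d)` for any `N ≥ N(d)`. -/
theorem Mfun_ge_exp_bound (d : ℕ) (hd : 2 ≤ d) (N : ℝ) (hN : Nfun d ≤ N)
    (Δ : ℝ) (hΔ : Δ ∈ Set.Icc (-Real.log d) (Real.log d)) :
    ENNReal.ofReal (N * (Real.exp (Δ / N) - 1 - Δ / N)) ≤ Mfun Δ d :=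
  Mfun_ge_exp_bound_general d hd N hN Δ

end
end

section
/- Let d ≥ 2 be an integer. Then for every Δ ∈ [-log d, log d], M(Δ,d) ≥ Δ² / (3·(log d)²). -/
open scoped ENNReal BigOperators

noncomputable section

/-!
Write `f = qaryEntropy d`, so that the constraint in `Mfun` says `Δ = f s - f r`, and
`φ y = log (d - 1) + log (1 - y) - log y` for its derivative, which is nonnegative on
`[0, (d - 1) / d]`. It suffices to show `(f s - f r)² ≤ 3 (log d)² D(s‖r)` there.

Both sides vanish at `s = r`; we move one endpoint and compare derivatives.
For `r ≤ s` two differentiations reduce the claim to `y (1 - y) φ(y)² ≤ 3/2 (log d)²`.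
For `s ≤ r`, concavity of `f` through `f 0 = 0` reduces it to
`f(y) (1 - y) φ(y) ≤ 3/2 (log d)²`, which also implies the former bound since `y φ(y) ≤ f(y)`.
With `m = log ((d - 1) / y)` one has `f(y) + (1 - y) φ(y) = m` and `f(y) ≤ y (m + 1)`; then
`f (m - f) ≤ m² / 4` settles `m ≤ 2.44 log d`, and beyond that
`y = (d - 1) e^{-m} ≤ 2^{-m / log d}` is small enough.
-/

open Real Set

lemma cubic_le_three_mul_exp {t : ℝ} (ht : 61 / 25 ≤ t) :
    (t + (log 2)⁻¹) * (2 * t ^ 2 - 3) ≤ 3 * t * exp (t * log 2) := by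
  have hlog2 := log_two_gt_d9
  have hinv : (log 2)⁻¹ ≤ 1.4427 := by
    rw [inv_le_comm₀ (by linarith) (by norm_num)]; linarith
  have hexp : ∑ i ∈ Finset.range 6, (0.6931 * t) ^ i / i.factorial ≤ exp (t * log 2) :=
    (sum_le_exp_of_nonneg (by positivity) 6).trans (exp_le_exp.2 (by nlinarith))
  simp only [Finset.sum_range_succ, Finset.sum_range_zero, Nat.factorial] at hexp
  norm_num at hexp
  obtain ⟨s, hs, rfl⟩ : ∃ s, 0 ≤ s ∧ t = 61 / 25 + s := ⟨t - 61 / 25, by linarith, by ring⟩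
  nlinarith [pow_nonneg hs 2, pow_nonneg hs 3, pow_nonneg hs 4, pow_nonneg hs 5, pow_nonneg hs 6]

lemma mul_exp_neg_le_exp_neg_log_two {A c t : ℝ} (hA : A + 1 = exp c) (hc : log 2 ≤ c)
    (ht : 2 ≤ t) : A * exp (-(t * c)) ≤ exp (-(t * log 2)) := by
  have hA : A ≤ exp (2 * c) / 4 := by
    rw [two_mul, exp_add, ← hA]; nlinarith [sq_nonneg (A - 1)]
  have h4 : (4 : ℝ) = exp (2 * log 2) := by
    rw [mul_comm, exp_mul, exp_log two_pos]; norm_num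
  calc A * exp (-(t * c)) ≤ exp (2 * c) / 4 * exp (-(t * c)) := by gcongr
    _ = exp (-((t - 2) * (c - log 2)) - t * log 2) := by
      rw [h4, ← exp_sub, ← exp_add]; ring_nf
    _ ≤ exp (-(t * log 2)) := by
      gcongr
      nlinarith [mul_nonneg (sub_nonneg.2 ht) (sub_nonneg.2 hc)]

lemma mul_sub_le_of_mul_le {F m c : ℝ} (hc : 0 < c) (hm0 : 0 ≤ m) (hm : 9 / 2 * c ^ 2 ≤ m ^ 2)
    (hF : F * (2 * m ^ 2 - 3 * c ^ 2) ≤ 3 * c ^ 2 * m) : F * (m - F) ≤ 3 / 2 * c ^ 2 := by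
  set k := 2 * m ^ 2 - 3 * c ^ 2
  have hk : 0 < k := by nlinarith
  -- `hF` puts `F` below `3 c² m / k`, which lies below the smaller root of `F (m - F) = 3/2 c²`.
  refine le_of_mul_le_mul_right ?_ (pow_pos hk 2)
  nlinarith [mul_nonneg (sub_nonneg.2 hF) (by nlinarith : 0 ≤ m * k - F * k - 3 * c ^ 2 * m),
    pow_pos hc 6]

lemma mul_sub_le_of_le_mul_exp_neg {A c m F : ℝ} (hA : A + 1 = exp c) (hc : log 2 ≤ c)
    (hm : c ≤ m) (hF : F ≤ A * exp (-m) * (m + 1)) : F * (m - F) ≤ 3 / 2 * c ^ 2 := by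
  have hc0 : 0 < c := (log_pos one_lt_two).trans_le hc
  obtain ⟨t, rfl⟩ : ∃ t, m = t * c := ⟨m / c, by field_simp⟩
  rcases le_or_gt t (61 / 25) with ht | ht
  · -- `F (m - F) ≤ m² / 4` and `(61/25)² / 4 < 3/2`
    have : t * c ≤ 61 / 25 * c := by gcongr
    nlinarith [sq_nonneg (t * c - 2 * F)]
  have htc : 61 / 25 * c ≤ t * c := by gcongr
  have hk : 0 ≤ 2 * t ^ 2 - 3 := by nlinarith
  refine mul_sub_le_of_mul_le hc0 (by positivity) (by nlinarith) ?_
  have hm1 : t * c + 1 ≤ c * (t + (log 2)⁻¹) := by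
    have : 1 ≤ c * (log 2)⁻¹ := by
      rw [← div_eq_mul_inv, one_le_div (log_pos one_lt_two)]; exact hc
    linarith
  calc F * (2 * (t * c) ^ 2 - 3 * c ^ 2)
      = F * (2 * t ^ 2 - 3) * c ^ 2 := by ring
    _ ≤ A * exp (-(t * c)) * (t * c + 1) * (2 * t ^ 2 - 3) * c ^ 2 := by gcongr
    _ ≤ exp (-(t * log 2)) * (c * (t + (log 2)⁻¹)) * (2 * t ^ 2 - 3) * c ^ 2 := by
      gcongr
      exact mul_exp_neg_le_exp_neg_log_two hA hc (by linarith)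
    _ = c ^ 3 * exp (-(t * log 2)) * ((t + (log 2)⁻¹) * (2 * t ^ 2 - 3)) := by ring
    _ ≤ c ^ 3 * exp (-(t * log 2)) * (3 * t * exp (t * log 2)) :=
      mul_le_mul_of_nonneg_left (cubic_le_three_mul_exp ht.le) (by positivity)
    _ = 3 * c ^ 2 * (t * c) := by
      rw [exp_neg]; field_simp

lemma le_of_hasDerivAt_nonneg {f f' : ℝ → ℝ} {a b : ℝ} (hab : a ≤ b)
    (hf : ContinuousOn f (Icc a b)) (hf' : ∀ x ∈ Ioo a b, HasDerivAt f (f' x) x)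
    (hf'₀ : ∀ x ∈ Ioo a b, 0 ≤ f' x) : f a ≤ f b := by
  rw [← interior_Icc] at hf' hf'₀
  exact monotoneOn_of_hasDerivWithinAt_nonneg (convex_Icc a b) hf
    (fun x hx => (hf' x hx).hasDerivWithinAt) hf'₀ (left_mem_Icc.2 hab) (right_mem_Icc.2 hab) hab

lemma hasDerivAt_log_one_sub {y : ℝ} (hy : y ≠ 1) :
    HasDerivAt (fun z => log (1 - z)) (-1 / (1 - y)) y :=
  ((hasDerivAt_id y).const_sub 1).log (sub_ne_zero.2 hy.symm)

section QaryEntropy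

variable {d : ℕ}

lemma qaryEntropy_eq (d : ℕ) (y : ℝ) :
    qaryEntropy d y = y * log (d - 1) - y * log y - (1 - y) * log (1 - y) := by
  simp only [qaryEntropy, binEntropy, log_inv]; push_cast; ring

lemma lt_one_of_le_sub_one_div (hd : 2 ≤ d) {x : ℝ} (hx : x ≤ ((d : ℝ) - 1) / d) : x < 1 := by
  have hd' : (2 : ℝ) ≤ d := by exact_mod_cast hd
  exact hx.trans_lt ((div_lt_one (by positivity)).2 (by linarith))

lemma log_sub_one_add_log_one_sub_sub_log_nonneg (hd : 2 ≤ d) {x : ℝ} (hx : 0 < x)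
    (hxb : x ≤ ((d : ℝ) - 1) / d) : 0 ≤ log (d - 1) + log (1 - x) - log x := by
  have hd' : (2 : ℝ) ≤ d := by exact_mod_cast hd
  have hx1 := lt_one_of_le_sub_one_div hd hxb
  rw [← log_mul (by linarith) (by linarith), sub_nonneg]
  refine log_le_log hx ?_
  rw [le_div_iff₀ (by positivity)] at hxb
  nlinarith

lemma qaryEntropy_le_qaryEntropy (hd : 2 ≤ d) {y z : ℝ} (hy : 0 ≤ y) (hyz : y ≤ z)
    (hz : z ≤ ((d : ℝ) - 1) / d) : qaryEntropy d y ≤ qaryEntropy d z := by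
  have hb : ((d : ℝ) - 1) / d = 1 - 1 / d := by
    have : (d : ℝ) ≠ 0 := by positivity
    field_simp
  rw [hb] at hz
  exact (qaryEntropy_strictMonoOn hd).monotoneOn ⟨hy, hyz.trans hz⟩ ⟨hy.trans hyz, hz⟩ hyz

lemma mul_qaryEntropy_le_mul_qaryEntropy {s ρ : ℝ} (hs : 0 ≤ s) (hsρ : s ≤ ρ) (hρ : ρ ≤ 1) :
    s * qaryEntropy d ρ ≤ ρ * qaryEntropy d s := by
  rcases hs.eq_or_lt with rfl | hs
  · simp
  have hρ0 : 0 < ρ := hs.trans_le hsρ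
  have h := (strictConcaveOn_qaryEntropy (q := d)).concaveOn.2 (left_mem_Icc.2 zero_le_one)
    ⟨hρ0.le, hρ⟩ (sub_nonneg.2 ((div_le_one hρ0).2 hsρ)) (by positivity) (sub_add_cancel 1 (s / ρ))
  simp only [smul_eq_mul, mul_zero, qaryEntropy_zero, zero_add, div_mul_cancel₀ s hρ0.ne'] at h
  rw [div_mul_eq_mul_div, div_le_iff₀ hρ0] at h
  linarith

lemma qaryEntropy_mul_one_sub_mul_deriv_le (hd : 2 ≤ d) {x : ℝ} (hx : 0 < x)
    (hxb : x ≤ ((d : ℝ) - 1) / d) :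
    qaryEntropy d x * ((1 - x) * (log (d - 1) + log (1 - x) - log x)) ≤ 3 / 2 * log d ^ 2 := by
  have hd' : (2 : ℝ) ≤ d := by exact_mod_cast hd
  have hx1 := lt_one_of_le_sub_one_div hd hxb
  have hA : (0 : ℝ) < d - 1 := by linarith
  set m := log ((d - 1) / x)
  have hm_eq : m = log (d - 1) - log x := log_div hA.ne' hx.ne'
  have hsplit : (1 - x) * (log (d - 1) + log (1 - x) - log x) = m - qaryEntropy d x := by
    rw [qaryEntropy_eq, hm_eq]; ring
  have hm : log d ≤ m := by
    refine log_le_log (by positivity) ?_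
    rw [le_div_iff₀ hx]
    rw [le_div_iff₀ (by positivity)] at hxb
    linarith
  have hxm : ((d : ℝ) - 1) * exp (-m) = x := by
    rw [exp_neg, exp_log (by positivity)]; field_simp
  have hF : qaryEntropy d x ≤ ((d : ℝ) - 1) * exp (-m) * (m + 1) := by
    have h := mul_le_mul_of_nonneg_left (one_sub_inv_le_log_of_pos (sub_pos.2 hx1))
      (sub_pos.2 hx1).le
    rw [mul_one_sub, mul_inv_cancel₀ (sub_pos.2 hx1).ne'] at h
    rw [hxm, qaryEntropy_eq, hm_eq]
    linarith
  rw [hsplit]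
  exact mul_sub_le_of_le_mul_exp_neg (by rw [exp_log (by positivity)]; ring)
    (log_le_log two_pos hd') hm hF

lemma mul_one_sub_mul_sq_deriv_le (hd : 2 ≤ d) {x : ℝ} (hx : 0 < x)
    (hxb : x ≤ ((d : ℝ) - 1) / d) :
    x * (1 - x) * (log (d - 1) + log (1 - x) - log x) ^ 2 ≤ 3 / 2 * log d ^ 2 := by
  have hx1 := lt_one_of_le_sub_one_div hd hxb
  have hφ := log_sub_one_add_log_one_sub_sub_log_nonneg hd hx hxb
  have hle : x * (log (d - 1) + log (1 - x) - log x) ≤ qaryEntropy d x := by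
    rw [qaryEntropy_eq]
    nlinarith [log_nonpos (sub_nonneg.2 hx1.le) (by linarith : 1 - x ≤ 1)]
  calc x * (1 - x) * (log (d - 1) + log (1 - x) - log x) ^ 2
      = x * (log (d - 1) + log (1 - x) - log x) *
          ((1 - x) * (log (d - 1) + log (1 - x) - log x)) := by ring
    _ ≤ qaryEntropy d x * ((1 - x) * (log (d - 1) + log (1 - x) - log x)) := by gcongr
    _ ≤ 3 / 2 * log d ^ 2 := qaryEntropy_mul_one_sub_mul_deriv_le hd hx hxb

lemma qaryEntropy_sub_mul_deriv_le (hd : 2 ≤ d) {r x : ℝ} (hr : 0 < r) (hrx : r ≤ x)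
    (hxb : x ≤ ((d : ℝ) - 1) / d) :
    (qaryEntropy d x - qaryEntropy d r) * (log (d - 1) + log (1 - x) - log x) ≤
      3 / 2 * log d ^ 2 * (log x - log r + (log (1 - r) - log (1 - x))) := by
  have hx1 := lt_one_of_le_sub_one_div hd hxb
  have key := le_of_hasDerivAt_nonneg (a := r) (b := x) hrx
    (f := fun y => 3 / 2 * log d ^ 2 * (log y - log r + (log (1 - r) - log (1 - y))) -
      (qaryEntropy d y - qaryEntropy d r) * (log (d - 1) + log (1 - y) - log y))
    (f' := fun y => (3 / 2 * log d ^ 2 + (qaryEntropy d y - qaryEntropy d r)) / (y * (1 - y)) -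
      (log (d - 1) + log (1 - y) - log y) ^ 2) ?_ ?_ ?_
  · simpa using key
  · refine continuousOn_of_forall_continuousAt fun y hy => ?_
    have : y ≠ 0 := by linarith [hy.1]
    have : 1 - y ≠ 0 := by linarith [hy.2]
    fun_prop (disch := assumption)
  · intro y hy
    have hy0 : y ≠ 0 := by linarith [hy.1]
    have hy1 : y ≠ 1 := by linarith [hy.2]
    have h1y : 1 - y ≠ 0 := sub_ne_zero.2 hy1.symm
    refine (((((hasDerivAt_log hy0).sub_const (log r)).add
      ((hasDerivAt_log_one_sub hy1).const_sub _)).const_mul (3 / 2 * log d ^ 2)).sub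
      (((hasDerivAt_qaryEntropy hy0 hy1).sub_const (qaryEntropy d r)).mul
        (((hasDerivAt_log_one_sub hy1).const_add _).sub (hasDerivAt_log hy0)))).congr_deriv ?_
    simp only [Pi.sub_apply]
    field_simp
    ring
  · intro y hy
    have hy0 : 0 < y := hr.trans hy.1
    have hyb : y ≤ ((d : ℝ) - 1) / d := hy.2.le.trans hxb
    have hy1 : 0 < 1 - y := sub_pos.2 (hy.2.trans hx1)
    rw [sub_nonneg, le_div_iff₀ (by positivity)]
    nlinarith [mul_one_sub_mul_sq_deriv_le hd hy0 hyb,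
      qaryEntropy_le_qaryEntropy hd hr.le hy.1.le hyb]

lemma sq_qaryEntropy_sub_le_of_le (hd : 2 ≤ d) {r s : ℝ} (hr : 0 < r) (hrs : r ≤ s)
    (hsb : s ≤ ((d : ℝ) - 1) / d) :
    (qaryEntropy d s - qaryEntropy d r) ^ 2 ≤
      3 * log d ^ 2 * (s * (log s - log r) + (1 - s) * (log (1 - s) - log (1 - r))) := by
  have hs1 := lt_one_of_le_sub_one_div hd hsb
  have key := le_of_hasDerivAt_nonneg (a := r) (b := s) hrs
    (f := fun y => 3 * log d ^ 2 * (y * (log y - log r) + (1 - y) * (log (1 - y) - log (1 - r))) -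
      (qaryEntropy d y - qaryEntropy d r) ^ 2)
    (f' := fun y => 3 * log d ^ 2 * (log y - log r + (log (1 - r) - log (1 - y))) -
      2 * (qaryEntropy d y - qaryEntropy d r) * (log (d - 1) + log (1 - y) - log y)) ?_ ?_ ?_
  · simpa using key
  · refine continuousOn_of_forall_continuousAt fun y hy => ?_
    have : y ≠ 0 := by linarith [hy.1]
    have : 1 - y ≠ 0 := by linarith [hy.2]
    fun_prop (disch := assumption)
  · intro y hy
    have hy0 : y ≠ 0 := by linarith [hy.1]
    have hy1 : y ≠ 1 := by linarith [hy.2]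
    have h1y : 1 - y ≠ 0 := sub_ne_zero.2 hy1.symm
    refine (((((hasDerivAt_id' y).mul ((hasDerivAt_log hy0).sub_const (log r))).add
      (((hasDerivAt_id' y).const_sub 1).mul ((hasDerivAt_log_one_sub hy1).sub_const _))).const_mul
        (3 * log d ^ 2)).sub
      (((hasDerivAt_qaryEntropy hy0 hy1).sub_const (qaryEntropy d r)).pow 2)).congr_deriv ?_
    field_simp
    ring
  · intro y hy
    have h := qaryEntropy_sub_mul_deriv_le hd hr hy.1.le (hy.2.le.trans hsb)
    linarith

lemma sq_qaryEntropy_sub_le_of_ge (hd : 2 ≤ d) {r s : ℝ} (hs : 0 ≤ s) (hsr : s ≤ r)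
    (hrb : r ≤ ((d : ℝ) - 1) / d) :
    (qaryEntropy d s - qaryEntropy d r) ^ 2 ≤
      3 * log d ^ 2 * (s * (log s - log r) + (1 - s) * (log (1 - s) - log (1 - r))) := by
  have hr1 := lt_one_of_le_sub_one_div hd hrb
  have key := le_of_hasDerivAt_nonneg (a := s) (b := r) hsr
    (f := fun ρ => 3 * log d ^ 2 * (s * (log s - log ρ) + (1 - s) * (log (1 - s) - log (1 - ρ))) -
      (qaryEntropy d s - qaryEntropy d ρ) ^ 2)
    (f' := fun ρ => 3 * log d ^ 2 * (ρ - s) / (ρ * (1 - ρ)) -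
      2 * (qaryEntropy d ρ - qaryEntropy d s) * (log (d - 1) + log (1 - ρ) - log ρ)) ?_ ?_ ?_
  · simpa using key
  · refine continuousOn_of_forall_continuousAt fun y hy => ?_
    have : 1 - y ≠ 0 := by linarith [hy.2]
    have : ContinuousAt (fun ρ => s * (log s - log ρ)) y := by
      rcases hs.eq_or_lt with rfl | hs
      · simpa using continuousAt_const
      · have : y ≠ 0 := by linarith [hy.1]
        fun_prop (disch := assumption)
    fun_prop (disch := assumption)
  · intro y hy
    have hy0 : y ≠ 0 := by linarith [hy.1]
    have hy1 : y ≠ 1 := by linarith [hy.2]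
    have h1y : 1 - y ≠ 0 := sub_ne_zero.2 hy1.symm
    refine ((((((hasDerivAt_log hy0).const_sub (log s)).const_mul s).add
      (((hasDerivAt_log_one_sub hy1).const_sub _).const_mul (1 - s))).const_mul
        (3 * log d ^ 2)).sub
      (((hasDerivAt_qaryEntropy hy0 hy1).const_sub (qaryEntropy d s)).pow 2)).congr_deriv ?_
    field_simp
    ring
  · intro ρ hρ
    have hρ0 : 0 < ρ := hs.trans_lt hρ.1
    have hρb : ρ ≤ ((d : ℝ) - 1) / d := hρ.2.le.trans hrb
    have h1ρ : 0 < 1 - ρ := sub_pos.2 (hρ.2.trans hr1)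
    have hφ := log_sub_one_add_log_one_sub_sub_log_nonneg hd hρ0 hρb
    have hconc := mul_qaryEntropy_le_mul_qaryEntropy (d := d) hs hρ.1.le (hρ.2.trans hr1).le
    have hmaster := qaryEntropy_mul_one_sub_mul_deriv_le hd hρ0 hρb
    rw [sub_nonneg, le_div_iff₀ (by positivity)]
    nlinarith [mul_le_mul_of_nonneg_right hconc (mul_nonneg h1ρ.le hφ),
      mul_le_mul_of_nonneg_left hmaster (sub_nonneg.2 hρ.1.le)]

lemma sq_qaryEntropy_sub_le (hd : 2 ≤ d) {r s : ℝ} (hs : s ∈ Icc (0 : ℝ) (((d : ℝ) - 1) / d))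
    (hr : r ∈ Icc (0 : ℝ) (((d : ℝ) - 1) / d)) (hrs : r = 0 → s = 0) :
    (qaryEntropy d s - qaryEntropy d r) ^ 2 ≤
      3 * log d ^ 2 * (s * log (s / r) + (1 - s) * log ((1 - s) / (1 - r))) := by
  rcases hr.1.eq_or_lt with rfl | hr0
  · simp [hrs rfl]
  have hs1 := lt_one_of_le_sub_one_div hd hs.2
  have hr1 := lt_one_of_le_sub_one_div hd hr.2
  have hlog : s * log (s / r) = s * (log s - log r) := by
    rcases hs.1.eq_or_lt with rfl | hs0
    · simp
    · rw [log_div hs0.ne' hr0.ne']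
  rw [hlog, log_div (by linarith) (by linarith)]
  rcases le_total r s with hrs | hsr
  · exact sq_qaryEntropy_sub_le_of_le hd hr0 hrs hs.2
  · exact sq_qaryEntropy_sub_le_of_ge hd hs.1 hsr hr.2

end QaryEntropy

theorem Mfun_ge_quadratic_general (d : ℕ) (hd : 2 ≤ d)
    (Δ : ℝ) :
    ENNReal.ofReal (Δ^2 / (3 * (Real.log d)^2)) ≤ Mfun Δ d := by
  refine le_sInf ?_
  rintro _ ⟨s, r, hs, hr, rfl, rfl⟩
  unfold binRelEntropy
  split_ifs with hinf
  · exact le_top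
  simp only [not_or, not_and, not_lt] at hinf
  have hlogd : 0 < log d := log_pos (by exact_mod_cast hd)
  have hΔ : binEntropy' s - binEntropy' r + (s - r) * log (d - 1) =
      qaryEntropy d s - qaryEntropy d r := by
    simp only [binEntropy', qaryEntropy_eq]; ring
  refine ENNReal.ofReal_le_ofReal ((div_le_iff₀' (by positivity)).2 ?_)
  rw [hΔ]
  exact sq_qaryEntropy_sub_le hd hs hr fun h => le_antisymm (hinf.1 h) hs.1

/-- quadratic lower bound `M(Δ,d) ≥ Δ²/(3 log² d)`. -/
theorem Mfun_ge_quadratic (d : ℕ) (hd : 2 ≤ d)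
    (Δ : ℝ) (hΔ : Δ ∈ Set.Icc (-Real.log d) (Real.log d)) :
    ENNReal.ofReal (Δ^2 / (3 * (Real.log d)^2)) ≤ Mfun Δ d :=
  Mfun_ge_quadratic_general d hd Δ

end
end

section
/- Let d ≥ 2 be an integer, let Δ ∈ [-log d, log d] with Δ ≠ 0, and let λ ∈ (0,1). Then M(λΔ, d) < λ · M(Δ, d) (an inequality in [0,∞], with λ·∞ = ∞; note M(λΔ,d) is finite since |λΔ| < log d). -/
open scoped ENNReal BigOperators

noncomputable section

/-- the slope constant `c_r = f'(r)` -/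
def cc (d : ℕ) (r : ℝ) : ℝ := Real.log ((d:ℝ) - 1) + Real.log (1 - r) - Real.log r

lemma constraint_eq (d : ℕ) (s r : ℝ) :
    binEntropy' s - binEntropy' r + (s - r) * Real.log ((d:ℝ) - 1)
      = Real.qaryEntropy d s - Real.qaryEntropy d r := by
  unfold binEntropy' Real.qaryEntropy Real.binEntropy
  push_cast
  simp only [Real.log_inv]
  ring

lemma Mfun_eq (d : ℕ) (hd : 2 ≤ d) (Δ' : ℝ) :
    Mfun Δ' d = sInf {m : ℝ≥0∞ | ∃ s r : ℝ, s ∈ Set.Icc (0:ℝ) (1 - 1/(d:ℝ)) ∧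
      r ∈ Set.Icc (0:ℝ) (1 - 1/(d:ℝ)) ∧
      Real.qaryEntropy d s - Real.qaryEntropy d r = Δ' ∧ m = binRelEntropy s r} := by
  have hD : (2:ℝ) ≤ (d:ℝ) := by exact_mod_cast hd
  have hc : ((d:ℝ) - 1) / d = 1 - 1/(d:ℝ) := by
    rw [sub_div, div_self (by linarith : (d:ℝ) ≠ 0)]
  unfold Mfun
  simp only [hc, constraint_eq d]

lemma relEnt_eq (d : ℕ) {s r : ℝ} (hr0 : r ≠ 0) (hr1 : r ≠ 1) :
    binRelEntropy s r = ENNReal.ofReal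
      (cc d r * (s - r) - (Real.qaryEntropy d s - Real.qaryEntropy d r)) := by
  unfold binRelEntropy
  rw [if_neg (by simp [hr0, hr1])]
  congr 1
  have h1 : s * Real.log (s / r) = s * Real.log s - s * Real.log r := by
    rcases eq_or_ne s 0 with h | h
    · simp [h]
    · rw [Real.log_div h hr0]; ring
  have h2 : (1 - s) * Real.log ((1 - s) / (1 - r))
      = (1 - s) * Real.log (1 - s) - (1 - s) * Real.log (1 - r) := by
    rcases eq_or_ne (1 - s) 0 with h | h
    · rw [h]; ring
    · rw [Real.log_div h (by intro hc; exact hr1 (by linarith))]; ring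
  rw [h1, h2]
  unfold cc Real.qaryEntropy Real.binEntropy
  push_cast
  simp only [Real.log_inv]
  ring

lemma cc_pos (d : ℕ) (hd : 2 ≤ d) {r : ℝ} (hr0 : 0 < r) (hra : r < 1 - 1/(d:ℝ)) :
    0 < cc d r := by
  have hD : (2:ℝ) ≤ (d:ℝ) := by exact_mod_cast hd
  have h1 : (0:ℝ) < 1 - r := by
    have : (0:ℝ) < 1/(d:ℝ) := by positivity
    linarith
  have h2 : (0:ℝ) < (d:ℝ) - 1 := by linarith
  unfold cc
  rw [← Real.log_mul (by linarith) (by linarith), ← Real.log_div (by positivity) (ne_of_gt hr0)]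
  apply Real.log_pos
  rw [lt_div_iff₀ hr0]
  have hD0 : (0:ℝ) < (d:ℝ) := by linarith
  have : r * (d:ℝ) < (d:ℝ) - 1 := by
    have := (mul_lt_mul_of_pos_right hra hD0)
    calc r * (d:ℝ) < (1 - 1/(d:ℝ)) * (d:ℝ) := this
      _ = (d:ℝ) - 1 := by field_simp
  nlinarith

lemma cc_A (d : ℕ) (hd : 2 ≤ d) : cc d (1 - 1/(d:ℝ)) = 0 := by
  have hD : (2:ℝ) ≤ (d:ℝ) := by exact_mod_cast hd
  have hD0 : (d:ℝ) ≠ 0 := by linarith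
  have h1 : (1:ℝ) - (1 - 1/(d:ℝ)) = 1/(d:ℝ) := by ring
  have h2 : (1:ℝ) - 1/(d:ℝ) = ((d:ℝ) - 1)/(d:ℝ) := by field_simp
  unfold cc
  rw [h1, h2, Real.log_div (show (d:ℝ)-1 ≠ 0 by linarith) hD0,
    Real.log_div one_ne_zero hD0, Real.log_one]
  ring

lemma fq_A (d : ℕ) (hd : 2 ≤ d) :
    Real.qaryEntropy d (1 - 1/(d:ℝ)) = Real.log d := by
  have hD : (2:ℝ) ≤ (d:ℝ) := by exact_mod_cast hd
  have hD0 : (d:ℝ) ≠ 0 := by linarith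
  have h1 : (1:ℝ) - (1 - 1/(d:ℝ)) = 1/(d:ℝ) := by ring
  have h2 : (1:ℝ) - 1/(d:ℝ) = ((d:ℝ) - 1)/(d:ℝ) := by field_simp
  unfold Real.qaryEntropy Real.binEntropy
  push_cast
  rw [h1, h2]
  rw [Real.log_inv, Real.log_inv, Real.log_div (show (d:ℝ)-1 ≠ 0 by linarith) hD0,
    Real.log_div one_ne_zero hD0, Real.log_one]
  field_simp
  ring


lemma tangent (d : ℕ) {r x : ℝ} (hr : r ∈ Set.Ioo (0:ℝ) 1) (hx : x ∈ Set.Icc (0:ℝ) 1)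
    (hxr : x ≠ r) :
    Real.qaryEntropy d x - Real.qaryEntropy d r < cc d r * (x - r) := by
  obtain ⟨hr0, hr1⟩ := hr
  obtain ⟨hx0, hx1⟩ := hx
  rcases hxr.lt_or_gt with hlt | hgt
  · -- x < r
    obtain ⟨ξ, hξ, hslope⟩ := exists_hasDerivAt_eq_slope (Real.qaryEntropy d) (cc d) hlt
      (Real.qaryEntropy_continuous (q := d)).continuousOn (fun y hy => by
        have hy0 : 0 < y := lt_of_le_of_lt hx0 hy.1
        have hy1 : y < 1 := lt_trans hy.2 hr1
        simpa [cc, sub_eq_add_neg, add_comm, add_left_comm, add_assoc] using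
          Real.hasDerivAt_qaryEntropy (q := d) (ne_of_gt hy0) (ne_of_lt hy1))
    have hccgt : cc d r < cc d ξ := by
      have h1 : Real.log (1 - r) < Real.log (1 - ξ) := by
        apply Real.log_lt_log (by linarith [hξ.2])
        linarith [hξ.2]
      have h2 : Real.log ξ < Real.log r := Real.log_lt_log (lt_of_le_of_lt hx0 hξ.1) hξ.2
      unfold cc; linarith
    have hpos : 0 < r - x := by linarith
    have := (lt_div_iff₀ hpos).mp (by rw [← hslope] at *; exact hccgt :
      cc d r < (Real.qaryEntropy d r - Real.qaryEntropy d x) / (r - x))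
    nlinarith
  · -- r < x
    obtain ⟨ξ, hξ, hslope⟩ := exists_hasDerivAt_eq_slope (Real.qaryEntropy d) (cc d) hgt
      (Real.qaryEntropy_continuous (q := d)).continuousOn (fun y hy => by
        have hy0 : 0 < y := lt_trans hr0 hy.1
        have hy1 : y < 1 := lt_of_lt_of_le hy.2 hx1
        simpa [cc, sub_eq_add_neg, add_comm, add_left_comm, add_assoc] using
          Real.hasDerivAt_qaryEntropy (q := d) (ne_of_gt hy0) (ne_of_lt hy1))
    have hcclt : cc d ξ < cc d r := by
      have h1 : Real.log (1 - ξ) < Real.log (1 - r) := by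
        apply Real.log_lt_log
        · have := lt_of_lt_of_le hξ.2 hx1; linarith
        · linarith [hξ.1]
      have h2 : Real.log r < Real.log ξ := Real.log_lt_log hr0 hξ.1
      unfold cc; linarith
    have hpos : 0 < x - r := by linarith
    have := (div_lt_iff₀ hpos).mp (by rw [← hslope] at *; exact hcclt :
      (Real.qaryEntropy d x - Real.qaryEntropy d r) / (x - r) < cc d r)
    linarith


lemma key (d : ℕ) (hd : 2 ≤ d) {r s lam : ℝ} (hr : r ∈ Set.Ioo (0:ℝ) (1 - 1/(d:ℝ)))
    (hs : s ∈ Set.Icc (0:ℝ) (1 - 1/(d:ℝ))) (hsr : s ≠ r) (hl0 : 0 < lam) (hl1 : lam < 1) :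
    ∃ t ∈ Set.Icc (0:ℝ) (1 - 1/(d:ℝ)),
      Real.qaryEntropy d t - Real.qaryEntropy d r
        = lam * (Real.qaryEntropy d s - Real.qaryEntropy d r) ∧
      cc d r * (t - r) < lam * (cc d r * (s - r)) := by
  have hD : (2:ℝ) ≤ (d:ℝ) := by exact_mod_cast hd
  have hdinv : (0:ℝ) < 1/(d:ℝ) := by positivity
  have hA1 : 1 - 1/(d:ℝ) < 1 := by linarith
  have hrA : r ∈ Set.Icc (0:ℝ) (1 - 1/(d:ℝ)) := ⟨hr.1.le, hr.2.le⟩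
  have hcpos : 0 < cc d r := cc_pos d hd hr.1 hr.2
  have hkonk := (Real.strictConcaveOn_qaryEntropy (q := d)).2
    ⟨hs.1, le_trans hs.2 hA1.le⟩ ⟨hr.1.le, le_trans hr.2.le hA1.le⟩ hsr
    (show (0:ℝ) < lam from hl0) (show (0:ℝ) < 1 - lam by linarith) (by ring)
  simp only [smul_eq_mul] at hkonk
  set u := lam * s + (1 - lam) * r with hu
  set y₀ := Real.qaryEntropy d r + lam * (Real.qaryEntropy d s - Real.qaryEntropy d r) with hy₀
  have hy₀u : y₀ < Real.qaryEntropy d u := by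
    have h : y₀ = lam * Real.qaryEntropy d s + (1 - lam) * Real.qaryEntropy d r := by
      rw [hy₀]; ring
    rw [h]; exact hkonk
  have hmono := (Real.qaryEntropy_strictMonoOn (q := d) hd)
  rcases hsr.lt_or_gt with hslt | hsgt
  · -- s < r
    have hfs : Real.qaryEntropy d s < Real.qaryEntropy d r := hmono hs hrA hslt
    have hsu : s < u := by nlinarith
    have hur : u < r := by nlinarith
    obtain ⟨t, htm, hft⟩ := intermediate_value_Icc hsu.le
      ((Real.qaryEntropy_continuous (q := d)).continuousOn)
      (⟨by nlinarith, hy₀u.le⟩ : y₀ ∈ Set.Icc (Real.qaryEntropy d s) (Real.qaryEntropy d u))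
    have htu : t < u := by
      rcases lt_or_eq_of_le htm.2 with h | h
      · exact h
      · exfalso; rw [h] at hft; rw [hft] at hy₀u; exact lt_irrefl _ hy₀u
    refine ⟨t, ⟨le_trans hs.1 htm.1, by linarith [hr.2]⟩, by rw [hft, hy₀]; ring, ?_⟩
    have h2 : cc d r * (t - r) < cc d r * (u - r) := by
      apply mul_lt_mul_of_pos_left _ hcpos; linarith
    calc cc d r * (t - r) < cc d r * (u - r) := h2
      _ = lam * (cc d r * (s - r)) := by rw [hu]; ring
  · -- r < s
    have hfs : Real.qaryEntropy d r < Real.qaryEntropy d s := hmono hrA hs hsgt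
    have hru : r < u := by nlinarith
    have huA : u ≤ 1 - 1/(d:ℝ) := by nlinarith [hs.2, hr.2.le]
    obtain ⟨t, htm, hft⟩ := intermediate_value_Icc hru.le
      ((Real.qaryEntropy_continuous (q := d)).continuousOn)
      (⟨by nlinarith, hy₀u.le⟩ : y₀ ∈ Set.Icc (Real.qaryEntropy d r) (Real.qaryEntropy d u))
    have htu : t < u := by
      rcases lt_or_eq_of_le htm.2 with h | h
      · exact h
      · exfalso; rw [h] at hft; rw [hft] at hy₀u; exact lt_irrefl _ hy₀u
    refine ⟨t, ⟨le_trans hr.1.le htm.1, le_trans htm.2 huA⟩, by rw [hft, hy₀]; ring, ?_⟩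
    have h2 : cc d r * (t - r) < cc d r * (u - r) := by
      apply mul_lt_mul_of_pos_left _ hcpos; linarith
    calc cc d r * (t - r) < cc d r * (u - r) := h2
      _ = lam * (cc d r * (s - r)) := by rw [hu]; ring

lemma exists_witness (d : ℕ) (hd : 2 ≤ d) {Δ' : ℝ} (h1 : -Real.log d < Δ')
    (h2 : Δ' < Real.log d) (h0 : Δ' ≠ 0) :
    ∃ s r : ℝ, s ∈ Set.Icc (0:ℝ) (1 - 1/(d:ℝ)) ∧ r ∈ Set.Icc (0:ℝ) (1 - 1/(d:ℝ)) ∧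
      0 < r ∧ r < 1 - 1/(d:ℝ) ∧
      Real.qaryEntropy d s - Real.qaryEntropy d r = Δ' ∧ (Δ' < 0 → s < r) := by
  have hD : (2:ℝ) ≤ (d:ℝ) := by exact_mod_cast hd
  have hdinv : (0:ℝ) < 1/(d:ℝ) := by positivity
  have hA0 : (0:ℝ) ≤ 1 - 1/(d:ℝ) := by
    have : 1/(d:ℝ) ≤ 1/2 := by
      rw [div_le_div_iff₀ (by linarith) (by norm_num)]; linarith
    linarith
  have hlogd : 0 < Real.log d := Real.log_pos (by linarith)
  have hf0 : Real.qaryEntropy d 0 = 0 := Real.qaryEntropy_zero d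
  have hfA : Real.qaryEntropy d (1 - 1/(d:ℝ)) = Real.log d := fq_A d hd
  have hmono := (Real.qaryEntropy_strictMonoOn (q := d) hd)
  have hivt : Set.Icc (0:ℝ) (Real.log d) ⊆
      Real.qaryEntropy d '' Set.Icc 0 (1 - 1/(d:ℝ)) := by
    have := intermediate_value_Icc hA0 ((Real.qaryEntropy_continuous (q := d)).continuousOn)
    rw [hf0, hfA] at this; exact this
  rcases lt_or_gt_of_ne h0 with hneg | hpos
  · -- Δ' < 0
    obtain ⟨r, hrm, hfr⟩ := hivt (⟨by linarith, by linarith⟩ :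
      (Real.log d - Δ')/2 ∈ Set.Icc (0:ℝ) (Real.log d))
    obtain ⟨s, hsm, hfs⟩ := hivt (⟨by linarith, by linarith⟩ :
      (Real.log d + Δ')/2 ∈ Set.Icc (0:ℝ) (Real.log d))
    have hr0 : 0 < r := by
      rcases lt_or_eq_of_le hrm.1 with h | h
      · exact h
      · exfalso; rw [← h, hf0] at hfr; linarith
    have hrA : r < 1 - 1/(d:ℝ) := by
      rcases lt_or_eq_of_le hrm.2 with h | h
      · exact h
      · exfalso; rw [h, hfA] at hfr; linarith
    have hsltr : s < r := by
      by_contra hcon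
      push_neg at hcon
      have := hmono.monotoneOn hrm hsm hcon
      rw [hfr, hfs] at this; linarith
    exact ⟨s, r, hsm, hrm, hr0, hrA, by rw [hfs, hfr]; ring, fun _ => hsltr⟩
  · -- Δ' > 0
    obtain ⟨r, hrm, hfr⟩ := hivt (⟨by linarith, by linarith⟩ :
      Real.log d - Δ' ∈ Set.Icc (0:ℝ) (Real.log d))
    have hr0 : 0 < r := by
      rcases lt_or_eq_of_le hrm.1 with h | h
      · exact h
      · exfalso; rw [← h, hf0] at hfr; linarith
    have hrA : r < 1 - 1/(d:ℝ) := by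
      rcases lt_or_eq_of_le hrm.2 with h | h
      · exact h
      · exfalso; rw [h, hfA] at hfr; linarith
    exact ⟨1 - 1/(d:ℝ), r, ⟨hA0, le_rfl⟩, hrm, hr0, hrA,
      by rw [hfA, hfr]; ring, fun h => absurd h (by linarith)⟩


/-- Any admissible pair `(s,r)` for slope `Δ` with moderate cost has `r` bounded below. -/
lemma rho_bound (d : ℕ) (hd : 2 ≤ d) {Δ : ℝ} (hΔ0 : Δ ≠ 0)
    (hΔle : |Δ| ≤ Real.log d) (B : ℝ) :
    ∃ ρ : ℝ, 0 < ρ ∧ ∀ s r : ℝ, s ∈ Set.Icc (0:ℝ) (1 - 1/(d:ℝ)) →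
      r ∈ Set.Icc (0:ℝ) (1 - 1/(d:ℝ)) →
      Real.qaryEntropy d s - Real.qaryEntropy d r = Δ →
      0 < r → cc d r * (s - r) - Δ ≤ B → ρ ≤ r := by
  have hD : (2:ℝ) ≤ (d:ℝ) := by exact_mod_cast hd
  have hdinv : (0:ℝ) < 1/(d:ℝ) := by positivity
  have hd12 : 1/(d:ℝ) ≤ 1/2 := by
    rw [div_le_div_iff₀ (by linarith) (by norm_num)]; linarith
  have hA0 : (0:ℝ) ≤ 1 - 1/(d:ℝ) := by linarith
  have hA1 : 1 - 1/(d:ℝ) < 1 := by linarith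
  have hlogd : 0 < Real.log d := Real.log_pos (by linarith)
  have hf0 : Real.qaryEntropy d 0 = 0 := Real.qaryEntropy_zero d
  have hfA : Real.qaryEntropy d (1 - 1/(d:ℝ)) = Real.log d := fq_A d hd
  have hmono := (Real.qaryEntropy_strictMonoOn (q := d) hd)
  have hivt : Set.Icc (0:ℝ) (Real.log d) ⊆
      Real.qaryEntropy d '' Set.Icc 0 (1 - 1/(d:ℝ)) := by
    have := intermediate_value_Icc hA0 ((Real.qaryEntropy_continuous (q := d)).continuousOn)
    rw [hf0, hfA] at this; exact this
  rcases hΔ0.lt_or_gt with hneg | hpos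
  · -- Δ < 0
    have hΔub : -Δ ≤ Real.log d := by
      have := abs_le.mp hΔle; linarith [this.1]
    obtain ⟨ρ, hρm, hfρ⟩ := hivt (⟨by linarith, by linarith⟩ :
      -Δ/2 ∈ Set.Icc (0:ℝ) (Real.log d))
    have hρ0 : 0 < ρ := by
      rcases lt_or_eq_of_le hρm.1 with h | h
      · exact h
      · exfalso; rw [← h, hf0] at hfρ; linarith
    refine ⟨ρ, hρ0, ?_⟩
    intro s r hs hr hc hr0 _
    have hfsnn : 0 ≤ Real.qaryEntropy d s :=
      Real.qaryEntropy_nonneg hs.1 (le_trans hs.2 hA1.le)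
    have hfrlb : -Δ ≤ Real.qaryEntropy d r := by linarith
    by_contra hcon
    push_neg at hcon
    have := hmono.monotoneOn hr hρm hcon.le
    rw [hfρ] at this
    linarith
  · -- Δ > 0
    have hΔub : Δ ≤ Real.log d := by
      have := abs_le.mp hΔle; linarith [this.2]
    obtain ⟨σ, hσm, hfσ⟩ := hivt (⟨by linarith, by linarith⟩ :
      Δ/2 ∈ Set.Icc (0:ℝ) (Real.log d))
    have hσ0 : 0 < σ := by
      rcases lt_or_eq_of_le hσm.1 with h | h
      · exact h
      · exfalso; rw [← h, hf0] at hfσ; linarith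
    refine ⟨min (σ/2) (min (Real.exp (-1)) (Real.exp (-(1 + 2*(B + Δ)/σ)))),
      lt_min (by linarith) (lt_min (Real.exp_pos _) (Real.exp_pos _)), ?_⟩
    intro s r hs hr hc hr0 hGB
    by_contra hcon
    push_neg at hcon
    have hrσ2 : r < σ/2 := lt_of_lt_of_le hcon (min_le_left _ _)
    have hre1 : r < Real.exp (-1) :=
      lt_of_lt_of_le hcon (le_trans (min_le_right _ _) (min_le_left _ _))
    have hrexp : r < Real.exp (-(1 + 2*(B + Δ)/σ)) :=
      lt_of_lt_of_le hcon (le_trans (min_le_right _ _) (min_le_right _ _))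
    have hfrnn : 0 ≤ Real.qaryEntropy d r :=
      Real.qaryEntropy_nonneg hr.1 (le_trans hr.2 hA1.le)
    have hfs : Δ ≤ Real.qaryEntropy d s := by linarith
    have hσs : σ ≤ s := by
      by_contra hss
      push_neg at hss
      have := hmono.monotoneOn hs hσm hss.le
      rw [hfσ] at this; linarith
    have hsr2 : σ/2 ≤ s - r := by linarith
    have hσA : σ ≤ 1 - 1/(d:ℝ) := hσm.2
    have hr12 : r ≤ 1/2 := by linarith
    have hlog2 : Real.log 2 ≤ 1 := by
      linarith [Real.log_le_sub_one_of_pos (by norm_num : (0:ℝ) < 2)]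
    have h1r : -1 ≤ Real.log (1 - r) := by
      have h12 : Real.log (2⁻¹ : ℝ) ≤ Real.log (1 - r) :=
        Real.log_le_log (by norm_num) (by linarith)
      rw [Real.log_inv] at h12
      linarith
    have hlogd1 : 0 ≤ Real.log ((d:ℝ) - 1) := Real.log_nonneg (by linarith)
    have hccr : -Real.log r - 1 ≤ cc d r := by unfold cc; linarith
    have hlogr1 : Real.log r < -1 := by
      calc Real.log r < Real.log (Real.exp (-1)) := Real.log_lt_log hr0 hre1
        _ = -1 := Real.log_exp _
    have hlogr2 : Real.log r < -(1 + 2*(B + Δ)/σ) := by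
      calc Real.log r < Real.log (Real.exp (-(1 + 2*(B + Δ)/σ))) :=
            Real.log_lt_log hr0 hrexp
        _ = _ := Real.log_exp _
    have hGlb : (-Real.log r - 1) * (σ/2) ≤ cc d r * (s - r) :=
      mul_le_mul hccr hsr2 (by linarith) (by linarith)
    have hmul : 2*(B + Δ)/σ * (σ/2) = B + Δ := by field_simp
    have hstep : (2*(B + Δ)/σ) * (σ/2) < (-Real.log r - 1) * (σ/2) := by
      apply mul_lt_mul_of_pos_right _ (by linarith : (0:ℝ) < σ/2)
      linarith
    rw [hmul] at hstep
    linarith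


/-- strict superadditivity under scaling, `M(λΔ,d) < λ·M(Δ,d)`. -/
theorem Mfun_scaling (d : ℕ) (hd : 2 ≤ d) (Δ : ℝ)
    (hΔ : Δ ∈ Set.Icc (-Real.log d) (Real.log d)) (hΔ0 : Δ ≠ 0)
    (lam : ℝ) (hlam : lam ∈ Set.Ioo (0:ℝ) 1) :
    Mfun (lam * Δ) d < ENNReal.ofReal lam * Mfun Δ d := by
  obtain ⟨hlam0, hlam1⟩ := hlam
  have hD : (2:ℝ) ≤ (d:ℝ) := by exact_mod_cast hd
  have hdinv : (0:ℝ) < 1/(d:ℝ) := by positivity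
  have hA1 : 1 - 1/(d:ℝ) < 1 := by linarith
  have hlogd : 0 < Real.log d := Real.log_pos (by linarith)
  have habs : |Δ| ≤ Real.log d := abs_le.mpr ⟨hΔ.1, hΔ.2⟩
  have hlamabs : |lam * Δ| < Real.log d := by
    rw [abs_mul, abs_of_pos hlam0]
    have h1 : 0 < |Δ| := abs_pos.mpr hΔ0
    nlinarith
  have h1' : -Real.log d < lam * Δ := by linarith [(abs_lt.mp hlamabs).1]
  have h2' : lam * Δ < Real.log d := (abs_lt.mp hlamabs).2
  have hlamΔ0 : lam * Δ ≠ 0 := mul_ne_zero (ne_of_gt hlam0) hΔ0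
  by_cases htop : Mfun Δ d = ⊤
  · -- infinite case: just exhibit a finite witness for lam * Δ
    obtain ⟨s, r, hsm, hrm, hr0, hrA, hco, -⟩ := exists_witness d hd h1' h2' hlamΔ0
    have hub : Mfun (lam * Δ) d ≤ binRelEntropy s r := by
      rw [Mfun_eq d hd]
      exact sInf_le ⟨s, r, hsm, hrm, hco, rfl⟩
    have hfin : binRelEntropy s r < ⊤ := by
      rw [relEnt_eq d (ne_of_gt hr0) (ne_of_lt (lt_trans hrA hA1))]
      exact ENNReal.ofReal_lt_top
    rw [htop, ENNReal.mul_top (ne_of_gt (ENNReal.ofReal_pos.mpr hlam0))]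
    exact lt_of_le_of_lt hub hfin
  · -- finite case
    obtain ⟨ρ, hρ0, hρprop'⟩ := rho_bound d hd hΔ0 habs (max ((Mfun Δ d + 1).toReal) 0)
    have hM1top : Mfun Δ d + 1 ≠ ⊤ := ENNReal.add_ne_top.mpr ⟨htop, ENNReal.one_ne_top⟩
    have hρprop : ∀ s r : ℝ, s ∈ Set.Icc (0:ℝ) (1 - 1/(d:ℝ)) →
        r ∈ Set.Icc (0:ℝ) (1 - 1/(d:ℝ)) →
        Real.qaryEntropy d s - Real.qaryEntropy d r = Δ →
        binRelEntropy s r < Mfun Δ d + 1 → 0 < r ∧ ρ ≤ r := by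
      intro s r hs hr hc hval
      have hr0 : 0 < r := by
        rcases lt_or_eq_of_le hr.1 with h | h
        · exact h
        · exfalso
          rw [← h] at hc hval
          rw [Real.qaryEntropy_zero] at hc
          rcases hΔ0.lt_or_gt with hneg | hpos
          · have := Real.qaryEntropy_nonneg (q := d) hs.1 (le_trans hs.2 hA1.le)
            linarith
          · have hs0 : s ≠ 0 := by
              intro h2; rw [h2, Real.qaryEntropy_zero] at hc; simp at hc; linarith
            have hs0' : 0 < s := lt_of_le_of_ne hs.1 (Ne.symm hs0)
            have hT : binRelEntropy s 0 = ⊤ := by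
              unfold binRelEntropy; rw [if_pos (Or.inl ⟨rfl, hs0'⟩)]
            rw [hT] at hval
            exact not_top_lt hval
      refine ⟨hr0, hρprop' s r hs hr hc hr0 ?_⟩
      rw [relEnt_eq d (ne_of_gt hr0) (ne_of_lt (lt_of_le_of_lt hr.2 hA1)), hc] at hval
      exact le_trans ((ENNReal.ofReal_le_iff_le_toReal hM1top).mp hval.le) (le_max_left _ _)
    -- a near-optimal witness
    have hMlt : sInf {m : ℝ≥0∞ | ∃ s r : ℝ, s ∈ Set.Icc (0:ℝ) (1 - 1/(d:ℝ)) ∧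
        r ∈ Set.Icc (0:ℝ) (1 - 1/(d:ℝ)) ∧
        Real.qaryEntropy d s - Real.qaryEntropy d r = Δ ∧ m = binRelEntropy s r}
        < Mfun Δ d + 1 := by
      rw [← Mfun_eq d hd Δ]
      exact ENNReal.lt_add_right htop one_ne_zero
    obtain ⟨m₀, hm₀S, hm₀lt⟩ := sInf_lt_iff.mp hMlt
    obtain ⟨s₀, r₀, hs₀, hr₀, hc₀, rfl⟩ := hm₀S
    obtain ⟨hr₀0, hρr₀⟩ := hρprop s₀ r₀ hs₀ hr₀ hc₀ hm₀lt
    have hval₀ : binRelEntropy s₀ r₀ = ENNReal.ofReal (cc d r₀ * (s₀ - r₀) - Δ) := by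
      rw [relEnt_eq d (ne_of_gt hr₀0) (ne_of_lt (lt_of_le_of_lt hr₀.2 hA1)), hc₀]
    -- compact minimization over r ≥ ρ
    have hKc : IsCompact {p : ℝ × ℝ | p.1 ∈ Set.Icc (0:ℝ) (1 - 1/(d:ℝ)) ∧
        p.2 ∈ Set.Icc ρ (1 - 1/(d:ℝ)) ∧
        Real.qaryEntropy d p.1 - Real.qaryEntropy d p.2 = Δ} := by
      apply IsCompact.of_isClosed_subset (isCompact_Icc.prod isCompact_Icc)
      · exact (isClosed_Icc.preimage continuous_fst).inter
          ((isClosed_Icc.preimage continuous_snd).inter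
            (isClosed_singleton.preimage
              ((Real.qaryEntropy_continuous.comp continuous_fst).sub
                (Real.qaryEntropy_continuous.comp continuous_snd))))
      · intro p hp
        exact ⟨hp.1, hp.2.1⟩
    have hGcont : ContinuousOn (fun p : ℝ × ℝ => cc d p.2 * (p.1 - p.2) - Δ)
        {p : ℝ × ℝ | p.1 ∈ Set.Icc (0:ℝ) (1 - 1/(d:ℝ)) ∧
          p.2 ∈ Set.Icc ρ (1 - 1/(d:ℝ)) ∧
          Real.qaryEntropy d p.1 - Real.qaryEntropy d p.2 = Δ} := by
      have hne0 : ∀ p : ℝ × ℝ, p ∈ {p : ℝ × ℝ | p.1 ∈ Set.Icc (0:ℝ) (1 - 1/(d:ℝ)) ∧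
          p.2 ∈ Set.Icc ρ (1 - 1/(d:ℝ)) ∧
          Real.qaryEntropy d p.1 - Real.qaryEntropy d p.2 = Δ} → p.2 ≠ 0 :=
        fun p hp => ne_of_gt (lt_of_lt_of_le hρ0 hp.2.1.1)
      have hne1 : ∀ p : ℝ × ℝ, p ∈ {p : ℝ × ℝ | p.1 ∈ Set.Icc (0:ℝ) (1 - 1/(d:ℝ)) ∧
          p.2 ∈ Set.Icc ρ (1 - 1/(d:ℝ)) ∧
          Real.qaryEntropy d p.1 - Real.qaryEntropy d p.2 = Δ} → (1:ℝ) - p.2 ≠ 0 := by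
        intro p hp h
        have := lt_of_le_of_lt hp.2.1.2 hA1
        linarith
      unfold cc
      exact (((continuousOn_const.add
          ((continuousOn_const.sub continuous_snd.continuousOn).log hne1)).sub
          (continuous_snd.continuousOn.log hne0)).mul
          (continuous_fst.continuousOn.sub continuous_snd.continuousOn)).sub
          continuousOn_const
    obtain ⟨⟨s', r'⟩, hp'K, hp'min⟩ := hKc.exists_isMinOn
      ⟨(s₀, r₀), hs₀, ⟨hρr₀, hr₀.2⟩, hc₀⟩ hGcont
    have hr'0 : 0 < r' := lt_of_lt_of_le hρ0 hp'K.2.1.1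
    have hr'A : r' ≤ 1 - 1/(d:ℝ) := hp'K.2.1.2
    have hr'1 : r' ≠ 1 := ne_of_lt (lt_of_le_of_lt hr'A hA1)
    have hc' : Real.qaryEntropy d s' - Real.qaryEntropy d r' = Δ := hp'K.2.2
    have hval' : binRelEntropy s' r' = ENNReal.ofReal (cc d r' * (s' - r') - Δ) := by
      rw [relEnt_eq d (ne_of_gt hr'0) hr'1, hc']
    have hs'r' : s' ≠ r' := by
      intro h
      rw [h, sub_self] at hc'
      exact hΔ0 hc'.symm
    have hG'pos : 0 < cc d r' * (s' - r') - Δ := by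
      have := tangent d (r := r') (x := s') ⟨hr'0, lt_of_le_of_lt hr'A hA1⟩
        ⟨hp'K.1.1, le_trans hp'K.1.2 hA1.le⟩ hs'r'
      linarith [hc']
    have hG'M : ENNReal.ofReal (cc d r' * (s' - r') - Δ) ≤ Mfun Δ d := by
      rw [Mfun_eq d hd Δ]
      apply le_sInf
      rintro m ⟨s, r, hs, hr, hcm, rfl⟩
      by_cases hρr : ρ ≤ r
      · have hmem : (s, r) ∈ {p : ℝ × ℝ | p.1 ∈ Set.Icc (0:ℝ) (1 - 1/(d:ℝ)) ∧
            p.2 ∈ Set.Icc ρ (1 - 1/(d:ℝ)) ∧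
            Real.qaryEntropy d p.1 - Real.qaryEntropy d p.2 = Δ} := ⟨hs, ⟨hρr, hr.2⟩, hcm⟩
        have hle := isMinOn_iff.mp hp'min (s, r) hmem
        have hvm : binRelEntropy s r = ENNReal.ofReal (cc d r * (s - r) - Δ) := by
          rw [relEnt_eq d (ne_of_gt (lt_of_lt_of_le hρ0 hρr))
            (ne_of_lt (lt_of_le_of_lt hr.2 hA1)), hcm]
        rw [hvm]
        exact ENNReal.ofReal_le_ofReal (by simpa using hle)
      · have hge : Mfun Δ d + 1 ≤ binRelEntropy s r := by
          by_contra hlt2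
          push_neg at hlt2
          exact hρr (hρprop s r hs hr hcm hlt2).2
        have hlt3 : ENNReal.ofReal (cc d r' * (s' - r') - Δ) < Mfun Δ d + 1 := by
          calc ENNReal.ofReal (cc d r' * (s' - r') - Δ)
              ≤ ENNReal.ofReal (cc d r₀ * (s₀ - r₀) - Δ) := by
                apply ENNReal.ofReal_le_ofReal
                have := isMinOn_iff.mp hp'min (s₀, r₀) ⟨hs₀, ⟨hρr₀, hr₀.2⟩, hc₀⟩
                simpa using this
            _ = binRelEntropy s₀ r₀ := hval₀.symm
            _ < Mfun Δ d + 1 := hm₀lt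
        exact le_trans hlt3.le hge
    -- produce the final witness for lam * Δ
    have hfin : ∃ t rr : ℝ, t ∈ Set.Icc (0:ℝ) (1 - 1/(d:ℝ)) ∧
        rr ∈ Set.Icc (0:ℝ) (1 - 1/(d:ℝ)) ∧
        Real.qaryEntropy d t - Real.qaryEntropy d rr = lam * Δ ∧
        binRelEntropy t rr < ENNReal.ofReal (lam * (cc d r' * (s' - r') - Δ)) := by
      rcases lt_or_eq_of_le hr'A with hlt | heq
      · obtain ⟨t, htm, htc, htlt⟩ := key d hd ⟨hr'0, hlt⟩ hp'K.1 hs'r' hlam0 hlam1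
        refine ⟨t, r', htm, ⟨hr'0.le, hr'A⟩, by rw [htc, hc'], ?_⟩
        rw [relEnt_eq d (ne_of_gt hr'0) hr'1, htc, hc']
        apply (ENNReal.ofReal_lt_ofReal_iff (mul_pos hlam0 hG'pos)).mpr
        have hring : lam * (cc d r' * (s' - r') - Δ)
            = lam * (cc d r' * (s' - r')) - lam * Δ := by ring
        linarith
      · have hccA : cc d r' = 0 := by rw [heq]; exact cc_A d hd
        have hG'eq : cc d r' * (s' - r') - Δ = -Δ := by rw [hccA]; ring
        have hΔneg : Δ < 0 := by rw [hG'eq] at hG'pos; linarith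
        obtain ⟨s, r, hsm, hrm, hr0, hrA2, hco, hslt⟩ := exists_witness d hd h1' h2' hlamΔ0
        have hsltr : s < r := hslt (by nlinarith)
        refine ⟨s, r, hsm, hrm, hco, ?_⟩
        rw [relEnt_eq d (ne_of_gt hr0) (ne_of_lt (lt_trans hrA2 hA1)), hco]
        apply (ENNReal.ofReal_lt_ofReal_iff (mul_pos hlam0 hG'pos)).mpr
        have hccp : 0 < cc d r := cc_pos d hd hr0 hrA2
        have hneg2 : cc d r * (s - r) < 0 := mul_neg_of_pos_of_neg hccp (by linarith)
        rw [hG'eq]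
        nlinarith
    obtain ⟨t, rr, htm, hrrm, htc, htlt⟩ := hfin
    calc Mfun (lam * Δ) d ≤ binRelEntropy t rr := by
          rw [Mfun_eq d hd]
          exact sInf_le ⟨t, rr, htm, hrrm, htc, rfl⟩
      _ < ENNReal.ofReal (lam * (cc d r' * (s' - r') - Δ)) := htlt
      _ = ENNReal.ofReal lam * ENNReal.ofReal (cc d r' * (s' - r') - Δ) :=
          ENNReal.ofReal_mul hlam0.le
      _ ≤ ENNReal.ofReal lam * Mfun Δ d := mul_le_mul_right hG'M _


end
end

section
/- Let d ≥ 2 be an integer. Then (1/4)·(log(d-1))² < N(d) < (1/4)·(log(d-1))² + 1, and moreover N(d) < (log d)². -/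
/-!
Substituting `r = (1 + exp (2u))⁻¹` gives `r (1 - r) = 1 / (4 cosh² u)` and
`log ((1 - r) / r · (d - 1)) = 2 (u + m)` with `m = log (d - 1) / 2`, so `N(d)` is the supremum of
`((u + m) / cosh u)²` over `u > 0`. This exceeds `m²` for small `u` because `cosh u - 1 = O(u²)`.
By Cauchy–Schwarz it is at most `m² + (u / sinh u)²`, which stays uniformly below `1 + m²` away from
`u = 0`, while near `u = 0` it is at most `(u + m)² < 1 + m²`. The bound by `(log d)²` then follows
from numerical values of `log 2` and `log 3` for `d ≤ 3` and from `log (d - 1) ≤ log d` for `d ≥ 4`.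
-/

open scoped ENNReal BigOperators

noncomputable section

open Real Set

lemma one_add_sq_div_two_add_pow_four_div_le_cosh (u : ℝ) :
    1 + u ^ 2 / 2 + u ^ 4 / 24 ≤ cosh u := by
  have h := sum_le_hasSum (Finset.range 3)
    (fun n _ => div_nonneg ((even_two_mul n).pow_nonneg u) (by positivity)) (hasSum_cosh u)
  norm_num [Finset.sum_range_succ, Nat.factorial] at h
  linarith

lemma self_add_pow_three_div_six_le_sinh {u : ℝ} (hu : 0 ≤ u) : u + u ^ 3 / 6 ≤ sinh u := by
  have h := sum_le_hasSum (Finset.range 2) (fun n _ => by positivity) (hasSum_sinh u)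
  norm_num [Finset.sum_range_succ, Nat.factorial] at h
  linarith

lemma cosh_le_one_add_sq {u : ℝ} (hu : |u| ≤ 1) : cosh u ≤ 1 + u ^ 2 := by
  have h₁ := (abs_le.1 (abs_exp_sub_one_sub_id_le hu)).2
  have h₂ := (abs_le.1 (abs_exp_sub_one_sub_id_le (x := -u) (by rwa [abs_neg]))).2
  rw [cosh_eq]
  nlinarith

lemma div_sinh_le_inv_one_add_sq_div_six {u : ℝ} (hu : 0 < u) :
    u / sinh u ≤ (1 + u ^ 2 / 6)⁻¹ := by
  have h := self_add_pow_three_div_six_le_sinh hu.le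
  rw [div_le_iff₀ (by linarith [pow_pos hu 3]), ← div_eq_inv_mul, le_div_iff₀ (by positivity)]
  nlinarith

-- The maximum of `u / cosh u` is about `0.6627`; the constant only has to stay below `log 2`.
lemma div_cosh_sq_le {u : ℝ} (hu : 0 ≤ u) : (u / cosh u) ^ 2 ≤ (69 / 100) ^ 2 := by
  have h := one_add_sq_div_two_add_pow_four_div_le_cosh u
  refine pow_le_pow_left₀ (div_nonneg hu (cosh_pos u).le) ?_ 2
  rw [div_le_iff₀ (cosh_pos u)]
  nlinarith [sq_nonneg (u ^ 2 - 3/2), sq_nonneg (u - 6/5)]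

lemma add_div_cosh_sq_le_sq_add_div_sinh_sq {u : ℝ} (hu : u ≠ 0) (m : ℝ) :
    ((u + m) / cosh u) ^ 2 ≤ m ^ 2 + (u / sinh u) ^ 2 := by
  have hs : sinh u ≠ 0 := sinh_ne_zero.2 hu
  have lagrange : (m ^ 2 + (u / sinh u) ^ 2) * (sinh u ^ 2 + 1) - (u + m) ^ 2 =
      (m * sinh u - u / sinh u) ^ 2 := by
    field_simp
    ring
  rw [div_pow, cosh_sq, div_le_iff₀ (by positivity)]
  linarith [sq_nonneg (m * sinh u - u / sinh u)]

lemma mul_one_sub_mul_log_sq_eq {c u r : ℝ} (hc : 0 < c) (hr : r = (1 + exp (2 * u))⁻¹) :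
    r * (1 - r) * log ((1 - r) / r * c) ^ 2 = ((u + log c / 2) / cosh u) ^ 2 := by
  have hodds : (1 - r) / r = exp (2 * u) := by
    rw [hr]; field_simp; ring
  have hprod : r * (1 - r) = (4 * cosh u ^ 2)⁻¹ := by
    rw [hr, cosh_eq, show 2 * u = u + u by ring, exp_add, exp_neg]
    field_simp
    ring
  rw [hodds, log_mul (exp_pos _).ne' hc.ne', log_exp, hprod]
  field_simp
  ring

lemma setOf_mul_one_sub_mul_log_sq_eq_image {c : ℝ} (hc : 0 < c) :
    {v : ℝ | ∃ r : ℝ, 0 < r ∧ r < 1/2 ∧ v = r * (1 - r) * (log ((1 - r) / r * c)) ^ 2} =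
      (fun u => ((u + log c / 2) / cosh u) ^ 2) '' Ioi 0 := by
  ext v
  constructor
  · rintro ⟨r, hr0, hr, rfl⟩
    refine ⟨log ((1 - r) / r) / 2, ?_, (mul_one_sub_mul_log_sq_eq hc ?_).symm⟩
    · exact div_pos (log_pos (by rw [lt_div_iff₀ hr0]; linarith)) two_pos
    · rw [mul_div_cancel₀ _ two_ne_zero, exp_log (div_pos (by linarith) hr0)]
      field_simp
      ring
  · rintro ⟨u, hu, rfl⟩
    have h1 : 1 < exp (2 * u) := one_lt_exp_iff.2 (by simpa using hu)
    refine ⟨(1 + exp (2 * u))⁻¹, by positivity, ?_, (mul_one_sub_mul_log_sq_eq hc rfl).symm⟩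
    rw [one_div, inv_lt_inv₀ (by positivity) two_pos]
    linarith

lemma exists_lt_add_div_cosh {m : ℝ} (hm : 0 ≤ m) : ∃ u, 0 < u ∧ m < (u + m) / cosh u := by
  set u := (m + 1)⁻¹
  have hu : 0 < u := by positivity
  have hmu : m * u < 1 := by
    rw [← div_eq_mul_inv, div_lt_one (by linarith)]; linarith
  have hcosh : cosh u ≤ 1 + u ^ 2 :=
    cosh_le_one_add_sq (by rw [abs_of_pos hu]; exact inv_le_one_of_one_le₀ (by linarith))
  refine ⟨u, hu, ?_⟩
  rw [lt_div_iff₀ (cosh_pos u)]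
  nlinarith [mul_le_mul_of_nonneg_left hcosh hm]

lemma exists_lt_one_add_sq_forall_add_div_cosh_sq_le {m : ℝ} (hm : 0 ≤ m) :
    ∃ B < 1 + m ^ 2, ∀ u, 0 < u → ((u + m) / cosh u) ^ 2 ≤ B := by
  set u₀ := (2 * (m + 1))⁻¹
  have hu₀ : 0 < u₀ := by positivity
  refine ⟨max ((u₀ + m) ^ 2) (m ^ 2 + (1 + u₀ ^ 2 / 6)⁻¹ ^ 2), max_lt ?_ ?_, fun u hu => ?_⟩
  · have : u₀ * (2 * (m + 1)) = 1 := inv_mul_cancel₀ (by positivity)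
    nlinarith
  · have : (1 + u₀ ^ 2 / 6)⁻¹ < 1 := inv_lt_one_of_one_lt₀ (by linarith [pow_pos hu₀ 2])
    nlinarith [inv_pos.2 (show 0 < 1 + u₀ ^ 2 / 6 by positivity)]
  rcases le_total u u₀ with hle | hle
  · refine le_max_of_le_left ?_
    rw [div_pow]
    calc (u + m) ^ 2 / cosh u ^ 2 ≤ (u + m) ^ 2 :=
          div_le_self (sq_nonneg _) (one_le_pow₀ (one_le_cosh u))
      _ ≤ (u₀ + m) ^ 2 := by gcongr
  · refine le_max_of_le_right ((add_div_cosh_sq_le_sq_add_div_sinh_sq hu.ne' m).trans ?_)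
    gcongr
    calc u / sinh u ≤ (1 + u ^ 2 / 6)⁻¹ := div_sinh_le_inv_one_add_sq_div_six hu
      _ ≤ (1 + u₀ ^ 2 / 6)⁻¹ := by gcongr

lemma quarter_mul_log_sub_one_sq_add_one_le_log_sq {d : ℕ} (hd : 3 ≤ d) :
    1 / 4 * log ((d : ℝ) - 1) ^ 2 + 1 ≤ log d ^ 2 := by
  have h2 := log_two_gt_d9
  rcases hd.eq_or_lt with rfl | hd4
  · norm_num
    nlinarith [log_two_lt_d9, log_three_gt_d9]
  · have hx : (4 : ℝ) ≤ d := by exact_mod_cast hd4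
    have hlog : log ((d : ℝ) - 1) ≤ log d := log_le_log (by linarith) (by linarith)
    have hlog4 : 2 * log 2 ≤ log d := by
      rw [← log_rpow two_pos]; exact log_le_log (by norm_num) (by norm_num; linarith)
    nlinarith [log_nonneg (show (1 : ℝ) ≤ d - 1 by linarith)]

/-- simple bounds on `N(d)`. -/
theorem Nfun_bounds (d : ℕ) (hd : 2 ≤ d) :
    (1/4) * (Real.log ((d:ℝ) - 1))^2 < Nfun d ∧
    Nfun d < (1/4) * (Real.log ((d:ℝ) - 1))^2 + 1 ∧
    Nfun d < (Real.log d)^2 := by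
  have hd1 : (1 : ℝ) ≤ d - 1 := by
    have : (2 : ℝ) ≤ d := by exact_mod_cast hd
    linarith
  set m := log ((d : ℝ) - 1) / 2 with hm_def
  have hm : 0 ≤ m := div_nonneg (log_nonneg hd1) two_pos.le
  have hN : Nfun d = sSup ((fun u => ((u + m) / cosh u) ^ 2) '' Ioi 0) :=
    congrArg sSup (setOf_mul_one_sub_mul_log_sq_eq_image (by linarith))
  have hquarter : 1 / 4 * log ((d : ℝ) - 1) ^ 2 = m ^ 2 := by ring
  obtain ⟨B, hB, hle⟩ := exists_lt_one_add_sq_forall_add_div_cosh_sq_le hm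
  obtain ⟨u, hu, hmu⟩ := exists_lt_add_div_cosh hm
  have hne : (((fun u => ((u + m) / cosh u) ^ 2) '' Ioi 0)).Nonempty := nonempty_Ioi.image _
  have hlower : m ^ 2 < Nfun d := hN ▸ (pow_lt_pow_left₀ hmu hm two_ne_zero).trans_le
    (le_csSup ⟨B, forall_mem_image.2 hle⟩ (mem_image_of_mem _ hu))
  have hupper : Nfun d ≤ B := hN ▸ csSup_le hne (forall_mem_image.2 hle)
  refine ⟨hquarter ▸ hlower, hquarter ▸ hupper.trans_lt (by linarith), ?_⟩
  rcases hd.eq_or_lt with rfl | hd3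
  · have hm0 : m = 0 := by norm_num [hm_def]
    have hN2 : Nfun 2 ≤ (69 / 100) ^ 2 := hN ▸ csSup_le hne
      (forall_mem_image.2 fun u hu => by simpa [hm0] using div_cosh_sq_le (le_of_lt hu))
    rw [Nat.cast_ofNat]
    nlinarith [log_two_gt_d9]
  · linarith [quarter_mul_log_sub_one_sq_add_one_le_log_sq hd3]

end
end

section
/- Let d ≥ 2 be an integer. There is a unique r_d ∈ (0,1/2) attaining the supremum defining N(d), and it is the unique r ∈ (0,1/2) satisfying (1-2r)·log(((1-r)/r)·(d-1)) = 2. Moreover, a probability vector p on Fin d satisfies V(p) = N(d), where V(p) = ∑ i, p i · (log (p i))² - (∑ i, p i · log (p i))², if and only if p is a permutation of the vector (1 - r_d, r_d/(d-1), …, r_d/(d-1)). -/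
/-!
Along the vectors `(1 - r, r / c, …, r / c)` with `c = d - 1` the varentropy is
`f r = r (1 - r) L(r)²`, `L(r) = log ((1 - r) / r * c)`, and `f' = L · ((1 - 2r) L - 2)`. As
`(1 - 2r) L` decreases strictly on `(0, 1/2]`, `f` has there a unique maximum, at the root `r_d` of
`(1 - 2r) L = 2`.

The varentropy attains its maximum on the simplex. A maximizer has no zero coordinate, since moving
mass `ε` onto one gains about `ε log² ε`; moving mass between two coordinates `i, j` then gives
`(log pᵢ - log pⱼ)(log pᵢ + log pⱼ + 2 - 2 ∑ p log p) = 0`, so `p` takes only two values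
`a ≥ b`. If the lower level carries mass `s`, the varentropy is `s (1 - s) log² (a / b)` with
`a / b ≤ (1 - s) / s * c`, hence at most `f s ≤ f r_d` (or `f (1/2)` when `s > 1/2`), with
equality only for a single top coordinate and `s = r_d`.
-/

open scoped ENNReal BigOperators

noncomputable section

open Real Set Filter Topology
open scoped Finset

namespace Varentropy

section TwoLevel

def scaledLogOdds (c r : ℝ) : ℝ := log ((1 - r) / r * c)

def twoLevelVarentropy (c r : ℝ) : ℝ := r * (1 - r) * scaledLogOdds c r ^ 2

variable {c r : ℝ}

lemma scaledLogOdds_pos (hc : 1 ≤ c) (hr : r ∈ Ioo (0:ℝ) (1/2)) : 0 < scaledLogOdds c r := by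
  have h : 1 < (1 - r) / r := by rw [one_lt_div hr.1]; linarith [hr.2]
  exact log_pos (one_lt_mul_of_lt_of_le h hc)

lemma hasDerivAt_scaledLogOdds (hc : 0 < c) (hr : r ∈ Ioo (0:ℝ) 1) :
    HasDerivAt (scaledLogOdds c) (-(r * (1 - r))⁻¹) r := by
  obtain ⟨hr0, hr1⟩ := hr
  have hsplit : ∀ x ∈ Ioo (0:ℝ) 1, scaledLogOdds c x = log (1 - x) - log x + log c := by
    intro x hx
    rw [scaledLogOdds, log_mul (by have := hx.1; have := hx.2; positivity) hc.ne',
      log_div (by linarith [hx.2]) hx.1.ne']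
  have hderiv : HasDerivAt (fun x => log (1 - x) - log x + log c) (-(r * (1 - r))⁻¹) r := by
    refine (((((hasDerivAt_id' r).const_sub 1).log (by linarith)).sub
      (hasDerivAt_log hr0.ne')).add_const (log c)).congr_deriv ?_
    field_simp
    ring
  exact hderiv.congr_of_eventuallyEq (eventually_of_mem (Ioo_mem_nhds hr0 hr1) hsplit)

lemma hasDerivAt_twoLevelVarentropy (hc : 0 < c) (hr : r ∈ Ioo (0:ℝ) 1) :
    HasDerivAt (twoLevelVarentropy c)
      (scaledLogOdds c r * ((1 - 2 * r) * scaledLogOdds c r - 2)) r := by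
  have hr0 : r ≠ 0 := hr.1.ne'
  have hr1 : 1 - r ≠ 0 := by linarith [hr.2]
  refine (((hasDerivAt_id' r).mul ((hasDerivAt_id' r).const_sub 1)).mul
    ((hasDerivAt_scaledLogOdds hc hr).pow 2)).congr_deriv ?_
  simp only [Pi.mul_apply, Pi.pow_apply]
  field_simp
  ring

lemma strictAntiOn_mul_scaledLogOdds (hc : 1 ≤ c) :
    StrictAntiOn (fun r => (1 - 2 * r) * scaledLogOdds c r) (Ioc 0 (1/2)) := by
  have hderiv : ∀ x ∈ Ioc (0:ℝ) (1/2), HasDerivAt (fun r => (1 - 2 * r) * scaledLogOdds c r)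
      (-2 * scaledLogOdds c x + (1 - 2 * x) * -(x * (1 - x))⁻¹) x := fun x hx => by
    refine ((((hasDerivAt_id' x).const_mul 2).const_sub 1).mul
      (hasDerivAt_scaledLogOdds (by linarith) ⟨hx.1, by linarith [hx.2]⟩)).congr_deriv ?_
    ring
  refine strictAntiOn_of_deriv_neg (convex_Ioc 0 (1/2))
    (fun x hx => (hderiv x hx).continuousAt.continuousWithinAt) fun x hx => ?_
  rw [interior_Ioc] at hx
  rw [(hderiv x (Ioo_subset_Ioc_self hx)).deriv]
  have := scaledLogOdds_pos hc hx
  have : 0 < (1 - 2 * x) * (x * (1 - x))⁻¹ := by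
    have := hx.1; have := hx.2
    exact mul_pos (by linarith) (inv_pos.2 (by nlinarith))
  linarith

lemma exists_mul_scaledLogOdds_eq_two (hc : 1 ≤ c) :
    ∃ r, r ∈ Ioo (0:ℝ) (1/2) ∧ (1 - 2 * r) * scaledLogOdds c r = 2 := by
  have he : 4 < exp 4 := by linarith [add_one_lt_exp (by norm_num : (4:ℝ) ≠ 0)]
  -- at `r₁ = 1 / (1 + e⁴)` the odds `(1 - r₁) / r₁` are `e⁴`
  set r₁ : ℝ := 1 / (1 + exp 4)
  have hr₁ : r₁ ∈ Ioo (0:ℝ) (1/4) := ⟨by positivity, by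
    rw [div_lt_div_iff₀ (by positivity) (by norm_num)]; linarith⟩
  have hlog : 4 ≤ scaledLogOdds c r₁ := by
    have hodds : (1 - r₁) / r₁ = exp 4 := by
      simp only [r₁]; field_simp; ring
    rw [scaledLogOdds, hodds]
    calc (4:ℝ) = log (exp 4) := (log_exp 4).symm
      _ ≤ log (exp 4 * c) := log_le_log (exp_pos 4) (le_mul_of_one_le_right (exp_pos 4).le hc)
  have hcont : ContinuousOn (fun r => (1 - 2 * r) * scaledLogOdds c r) (Icc r₁ (1/2)) :=
    fun x hx => ((continuousAt_const.sub (continuousAt_const.mul continuousAt_id)).mul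
      (hasDerivAt_scaledLogOdds (c := c) (by linarith)
        ⟨hr₁.1.trans_le hx.1, by linarith [hx.2]⟩).continuousAt).continuousWithinAt
  obtain ⟨r, hr, hr2⟩ := intermediate_value_Ioo' (by linarith [hr₁.2]) hcont
    (show (2:ℝ) ∈ Ioo ((1 - 2 * (1/2)) * scaledLogOdds c (1/2)) ((1 - 2 * r₁) * scaledLogOdds c r₁)
      from ⟨by norm_num, by nlinarith [hr₁.2]⟩)
  exact ⟨r, ⟨hr₁.1.trans hr.1, hr.2⟩, hr2⟩

/-- The number `r_d` of the paper, for `c = d - 1`. -/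
def twoLevelArgmax (c : ℝ) : ℝ :=
  Classical.epsilon fun r => r ∈ Ioo (0:ℝ) (1/2) ∧ (1 - 2 * r) * scaledLogOdds c r = 2

lemma twoLevelArgmax_spec (hc : 1 ≤ c) :
    twoLevelArgmax c ∈ Ioo (0:ℝ) (1/2) ∧
      (1 - 2 * twoLevelArgmax c) * scaledLogOdds c (twoLevelArgmax c) = 2 :=
  Classical.epsilon_spec (exists_mul_scaledLogOdds_eq_two hc)

lemma twoLevelArgmax_mem_Ioo_zero_one (hc : 1 ≤ c) : twoLevelArgmax c ∈ Ioo (0:ℝ) 1 :=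
  Ioo_subset_Ioo_right (by norm_num) (twoLevelArgmax_spec hc).1

lemma twoLevelVarentropy_pos (hc : 1 ≤ c) (hr : r ∈ Ioo (0:ℝ) (1/2)) :
    0 < twoLevelVarentropy c r := by
  have := scaledLogOdds_pos hc hr
  have := hr.1; have : 0 < 1 - r := by linarith [hr.2]
  unfold twoLevelVarentropy; positivity

lemma twoLevelVarentropy_lt_twoLevelArgmax (hc : 1 ≤ c) (hr : r ∈ Ioc (0:ℝ) (1/2))
    (hne : r ≠ twoLevelArgmax c) :
    twoLevelVarentropy c r < twoLevelVarentropy c (twoLevelArgmax c) := by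
  obtain ⟨hrd, hcrit⟩ := twoLevelArgmax_spec hc
  set rd := twoLevelArgmax c
  have hderiv : ∀ x ∈ Ioc (0:ℝ) (1/2), HasDerivAt (twoLevelVarentropy c)
      (scaledLogOdds c x * ((1 - 2 * x) * scaledLogOdds c x - 2)) x := fun x hx =>
    hasDerivAt_twoLevelVarentropy (by linarith) ⟨hx.1, by linarith [hx.2]⟩
  have hcont : ContinuousOn (twoLevelVarentropy c) (Ioc 0 (1/2)) :=
    fun x hx => (hderiv x hx).continuousAt.continuousWithinAt
  have hanti := strictAntiOn_mul_scaledLogOdds hc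
  have hrd' : rd ∈ Ioc (0:ℝ) (1/2) := Ioo_subset_Ioc_self hrd
  -- the derivative has the sign of `(1 - 2 x) scaledLogOdds c x - 2`, decreasing with zero `rd`
  rcases hne.lt_or_gt with hlt | hgt
  · refine strictMonoOn_of_deriv_pos (convex_Ioc 0 rd)
      (hcont.mono (Ioc_subset_Ioc_right hrd.2.le)) (fun x hx => ?_) ⟨hr.1, hlt.le⟩
      ⟨hrd.1, le_rfl⟩ hlt
    rw [interior_Ioc] at hx
    have hx' : x ∈ Ioo (0:ℝ) (1/2) := ⟨hx.1, hx.2.trans hrd.2⟩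
    rw [(hderiv x (Ioo_subset_Ioc_self hx')).deriv]
    exact mul_pos (scaledLogOdds_pos hc hx')
      (by linarith [hanti (Ioo_subset_Ioc_self hx') hrd' hx.2])
  · refine strictAntiOn_of_deriv_neg (convex_Icc rd (1/2))
      (hcont.mono (Icc_subset_Ioc_iff hrd.2.le |>.2 ⟨hrd.1, le_rfl⟩)) (fun x hx => ?_)
      ⟨le_rfl, hrd.2.le⟩ ⟨hgt.le, hr.2⟩ hgt
    rw [interior_Icc] at hx
    have hx' : x ∈ Ioo (0:ℝ) (1/2) := ⟨hrd.1.trans hx.1, hx.2⟩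
    rw [(hderiv x (Ioo_subset_Ioc_self hx')).deriv]
    exact mul_neg_of_pos_of_neg (scaledLogOdds_pos hc hx')
      (by linarith [hanti hrd' (Ioo_subset_Ioc_self hx') hx.1])

lemma twoLevelVarentropy_le_twoLevelArgmax (hc : 1 ≤ c) (hr : r ∈ Ioc (0:ℝ) (1/2)) :
    twoLevelVarentropy c r ≤ twoLevelVarentropy c (twoLevelArgmax c) := by
  rcases eq_or_ne r (twoLevelArgmax c) with rfl | hne
  · exact le_rfl
  · exact (twoLevelVarentropy_lt_twoLevelArgmax hc hr hne).le

lemma Nfun_eq_twoLevelVarentropy {d : ℕ} (hd : (1:ℝ) ≤ d - 1) :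
    Nfun d = twoLevelVarentropy ((d:ℝ) - 1) (twoLevelArgmax ((d:ℝ) - 1)) := by
  obtain ⟨hrd, -⟩ := twoLevelArgmax_spec hd
  refine IsGreatest.csSup_eq ⟨⟨_, hrd.1, hrd.2, rfl⟩, ?_⟩
  rintro _ ⟨r, hr0, hr1, rfl⟩
  exact twoLevelVarentropy_le_twoLevelArgmax hd ⟨hr0, hr1.le⟩

/-- The bound for a vector with two levels of total masses `1 - s` and `s` and ratio `u`. -/
lemma mul_one_sub_mul_log_sq_lt_or_eq (hc : 1 ≤ c) {s u : ℝ} (hs0 : 0 ≤ s) (hs1 : s < 1)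
    (hu : 1 ≤ u) (hsu : s * u ≤ (1 - s) * c) :
    s * (1 - s) * log u ^ 2 < twoLevelVarentropy c (twoLevelArgmax c) ∨
      (s = twoLevelArgmax c ∧ s * u = (1 - s) * c) := by
  obtain ⟨hrd, -⟩ := twoLevelArgmax_spec hc
  have hlogu : 0 ≤ log u := log_nonneg hu
  rcases hs0.eq_or_lt with rfl | hs0
  · left; simpa using twoLevelVarentropy_pos hc hrd
  have hs1' : 0 < s * (1 - s) := mul_pos hs0 (by linarith)
  rcases le_or_gt s (1/2) with hs | hs
  · have hu' : u ≤ (1 - s) / s * c := by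
      rw [div_mul_eq_mul_div, le_div_iff₀ hs0]; linarith
    have hlog : log u ≤ scaledLogOdds c s := log_le_log (by linarith) hu'
    have hle := twoLevelVarentropy_le_twoLevelArgmax hc ⟨hs0, hs⟩
    rcases hlog.lt_or_eq with hlt | heq
    · left
      calc s * (1 - s) * log u ^ 2 < twoLevelVarentropy c s :=
            mul_lt_mul_of_pos_left (pow_lt_pow_left₀ hlt hlogu two_ne_zero) hs1'
        _ ≤ _ := hle
    by_cases hsrd : s = twoLevelArgmax c
    · right
      refine ⟨hsrd, ?_⟩
      have hu0 : 0 < u := by linarith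
      rw [log_injOn_pos hu0 (hu0.trans_le hu') heq]
      field_simp
    · left
      calc s * (1 - s) * log u ^ 2 = twoLevelVarentropy c s := by rw [heq]; rfl
        _ < _ := twoLevelVarentropy_lt_twoLevelArgmax hc ⟨hs0, hs⟩ hsrd
  · left
    have hu' : u ≤ c := by nlinarith
    calc s * (1 - s) * log u ^ 2 ≤ 1 / 4 * log c ^ 2 :=
          mul_le_mul (by nlinarith) (pow_le_pow_left₀ hlogu (log_le_log (by linarith) hu') 2)
            (sq_nonneg _) (by norm_num)
      _ = twoLevelVarentropy c (1/2) := by norm_num [twoLevelVarentropy, scaledLogOdds]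
      _ < _ := twoLevelVarentropy_lt_twoLevelArgmax hc ⟨by norm_num, le_rfl⟩ hrd.2.ne'

end TwoLevel

lemma continuousOn_mul_log_sq : ContinuousOn (fun x : ℝ => x * log x ^ 2) (Ici 0) := by
  -- `x log² x = (2 √x log √x)²` on `[0, ∞)`, and `t ↦ t log t` is continuous
  have h : Continuous fun x : ℝ => (2 * (√x * log √x)) ^ 2 :=
    ((continuous_mul_log.comp continuous_sqrt).const_mul 2).pow 2
  refine h.continuousOn.congr fun x (hx : 0 ≤ x) => ?_
  show x * log x ^ 2 = (2 * (√x * log √x)) ^ 2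
  rw [log_sqrt hx]
  linear_combination -(log x ^ 2) * sq_sqrt hx

lemma hasDerivAt_mul_log_sq {x : ℝ} (hx : x ≠ 0) :
    HasDerivAt (fun x => x * log x ^ 2) (log x ^ 2 + 2 * log x) x :=
  ((hasDerivAt_id' x).mul ((hasDerivAt_log hx).fun_pow 2)).congr_deriv (by field_simp; ring)

lemma tendsto_sub_div_of_hasDerivAt {F : ℝ → ℝ} {D x : ℝ} (hF : HasDerivAt F D x) :
    Tendsto (fun ε => (F (x - ε) - F x) / ε) (𝓝[>] 0) (𝓝 (-D)) := by
  have h := HasDerivAt.comp_const_sub x 0 (by rwa [sub_zero])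
  simpa [div_eq_inv_mul] using h.tendsto_slope_zero_right

section Transfer

variable {ι : Type*} [DecidableEq ι]

def transfer (p : ι → ℝ) (i j : ι) (ε : ℝ) : ι → ℝ :=
  Function.update (Function.update p j (p j - ε)) i (p i + ε)

lemma transfer_zero (p : ι → ℝ) (i j : ι) : transfer p i j 0 = p := by simp [transfer]

end Transfer

section Simplex

variable {ι : Type*} [Fintype ι]

def varentropy (p : ι → ℝ) : ℝ := ∑ i, p i * log (p i) ^ 2 - (∑ i, p i * log (p i)) ^ 2

lemma continuousOn_varentropy : ContinuousOn (varentropy (ι := ι)) (stdSimplex ℝ ι) := by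
  refine .sub (continuousOn_finsetSum _ fun i _ => ?_)
    ((continuous_finsetSum _ fun i _ => continuous_mul_log.comp (continuous_apply i)).pow 2
      |>.continuousOn)
  exact continuousOn_mul_log_sq.comp (continuous_apply i).continuousOn fun p hp => hp.1 i

lemma exists_isMaxOn_varentropy [Nonempty ι] :
    ∃ p ∈ stdSimplex ℝ ι, IsMaxOn varentropy (stdSimplex ℝ ι) p :=
  (isCompact_stdSimplex ℝ ι).exists_isMaxOn
    (by classical exact ⟨_, single_mem_stdSimplex ℝ (Classical.arbitrary ι)⟩)
    continuousOn_varentropy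

variable [DecidableEq ι]

lemma sum_comp_eq_of_two_level (F : ℝ → ℝ) {p : ι → ℝ} {A : Finset ι} {a b : ℝ}
    (ha : ∀ k ∈ A, p k = a) (hb : ∀ k ∉ A, p k = b) :
    ∑ k, F (p k) = #A * F a + #Aᶜ * F b := by
  rw [← Finset.sum_add_sum_compl A, Finset.sum_congr (s₁ := A) rfl fun k hk => congrArg F (ha k hk),
    Finset.sum_congr (s₁ := Aᶜ) rfl fun k hk => congrArg F (hb k (Finset.mem_compl.1 hk))]
  simp

lemma varentropy_eq_of_two_level {p : ι → ℝ} {A : Finset ι} {a b : ℝ}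
    (ha : ∀ k ∈ A, p k = a) (hb : ∀ k ∉ A, p k = b) (hsum : ∑ k, p k = 1) :
    varentropy p = (#A * a) * (#Aᶜ * b) * (log a - log b) ^ 2 := by
  have hmass : (#A * a) + (#Aᶜ * b) = 1 := by
    simpa using (sum_comp_eq_of_two_level id ha hb).symm.trans hsum
  rw [varentropy, sum_comp_eq_of_two_level (fun x => x * log x ^ 2) ha hb,
    sum_comp_eq_of_two_level (fun x => x * log x) ha hb]
  linear_combination -(#A * a * log a ^ 2 + #Aᶜ * b * log b ^ 2) * hmass

lemma sum_comp_update (F : ℝ → ℝ) (p : ι → ℝ) (i : ι) (x : ℝ) :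
    ∑ k, F (Function.update p i x k) = ∑ k, F (p k) + (F x - F (p i)) := by
  rw [Finset.sum_eq_add_sum_sdiff_singleton_of_mem (Finset.mem_univ i) fun k => F (p k)]
  simp_rw [Function.apply_update (fun _ => F)]
  rw [Finset.sum_update_of_mem (Finset.mem_univ i)]
  ring

variable {p : ι → ℝ} {i j : ι}

lemma sum_comp_transfer (F : ℝ → ℝ) (hij : i ≠ j) (ε : ℝ) :
    ∑ k, F (transfer p i j ε k) =
      ∑ k, F (p k) + (F (p i + ε) - F (p i)) + (F (p j - ε) - F (p j)) := by
  rw [transfer, sum_comp_update, sum_comp_update, Function.update_of_ne hij]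
  ring

lemma transfer_mem_stdSimplex (hp : p ∈ stdSimplex ℝ ι) (hij : i ≠ j) {ε : ℝ}
    (hi : 0 ≤ p i + ε) (hj : 0 ≤ p j - ε) : transfer p i j ε ∈ stdSimplex ℝ ι := by
  refine ⟨fun k => ?_, by simpa [hp.2] using sum_comp_transfer (p := p) id hij ε⟩
  simp only [transfer, Function.update_apply]
  split_ifs
  exacts [hi, hj, hp.1 k]

lemma hasDerivAt_sum_comp_transfer {F : ℝ → ℝ} {Fi Fj : ℝ} (hi : HasDerivAt F Fi (p i))
    (hj : HasDerivAt F Fj (p j)) (hij : i ≠ j) :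
    HasDerivAt (fun ε => ∑ k, F (transfer p i j ε k)) (Fi - Fj) 0 := by
  simp_rw [sum_comp_transfer F hij]
  have hi' := HasDerivAt.comp_const_add (p i) 0 (by rwa [add_zero])
  have hj' := HasDerivAt.comp_const_sub (p j) 0 (by rwa [sub_zero])
  exact (((hi'.sub_const (F (p i))).const_add _).add (hj'.sub_const (F (p j)))).congr_deriv
    (sub_eq_add_neg _ _).symm

lemma hasDerivAt_varentropy_transfer (hpi : p i ≠ 0) (hpj : p j ≠ 0) (hij : i ≠ j) :
    HasDerivAt (fun ε => varentropy (transfer p i j ε))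
      ((log (p i) - log (p j)) * (log (p i) + log (p j) + 2 - 2 * ∑ k, p k * log (p k))) 0 := by
  have hS := hasDerivAt_sum_comp_transfer (hasDerivAt_mul_log hpi) (hasDerivAt_mul_log hpj) hij
  have hA := hasDerivAt_sum_comp_transfer (hasDerivAt_mul_log_sq hpi) (hasDerivAt_mul_log_sq hpj)
    hij
  refine (hA.sub (hS.fun_pow 2)).congr_deriv ?_
  simp only [transfer_zero]
  ring

lemma log_sub_mul_eq_zero_of_isMaxOn (hp : p ∈ stdSimplex ℝ ι)
    (hmax : IsMaxOn varentropy (stdSimplex ℝ ι) p) (hpos : ∀ k, 0 < p k) (i j : ι) :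
    (log (p i) - log (p j)) * (log (p i) + log (p j) + 2 - 2 * ∑ k, p k * log (p k)) = 0 := by
  rcases eq_or_ne i j with rfl | hij
  · simp
  refine IsLocalMax.hasDerivAt_eq_zero ?_
    (hasDerivAt_varentropy_transfer (hpos i).ne' (hpos j).ne' hij)
  have hδ : 0 < min (p i) (p j) := lt_min (hpos i) (hpos j)
  filter_upwards [Ioo_mem_nhds (neg_neg_of_pos hδ) hδ] with ε hε
  rw [transfer_zero]
  exact hmax (transfer_mem_stdSimplex hp hij (by linarith [hε.1, min_le_left (p i) (p j)])
    (by linarith [hε.2, min_le_right (p i) (p j)]))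

lemma pos_of_isMaxOn (hp : p ∈ stdSimplex ℝ ι) (hmax : IsMaxOn varentropy (stdSimplex ℝ ι) p)
    (i : ι) : 0 < p i := by
  refine (hp.1 i).lt_of_ne' fun hi => ?_
  obtain ⟨j, hj⟩ : ∃ j, 0 < p j := by
    by_contra! h
    linarith [hp.2, Finset.sum_nonpos fun k (_ : k ∈ Finset.univ) => h k]
  have hij : i ≠ j := by rintro rfl; linarith
  -- Moving mass `ε` onto the empty coordinate `i` changes `varentropy` by about `ε log² ε`.
  set S := ∑ k, p k * log (p k)
  set δG : ℝ → ℝ := fun ε => ((p j - ε) * log (p j - ε) ^ 2 - p j * log (p j) ^ 2) / ε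
  set δH : ℝ → ℝ := fun ε => ((p j - ε) * log (p j - ε) - p j * log (p j)) / ε
  set σ : ℝ → ℝ := fun ε => 2 * S + ε * (log ε + δH ε)
  have hslope : ∀ ε ∈ Ioi (0:ℝ), (varentropy (transfer p i j ε) - varentropy p) / ε =
      log ε * (log ε - σ ε) + (δG ε - δH ε * σ ε) := by
    intro ε (hε : 0 < ε)
    rw [varentropy, varentropy, sum_comp_transfer (fun x => x * log x ^ 2) hij,
      sum_comp_transfer (fun x => x * log x) hij, hi]
    simp only [δG, δH, σ, S, zero_add, zero_mul, sub_zero]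
    field_simp
    ring
  have hδG := tendsto_sub_div_of_hasDerivAt (hasDerivAt_mul_log_sq hj.ne')
  have hδH := tendsto_sub_div_of_hasDerivAt (hasDerivAt_mul_log hj.ne')
  have hσ : Tendsto σ (𝓝[>] 0) (𝓝 (2 * S)) := by
    have h0 : Tendsto (fun ε : ℝ => ε * log ε + ε * δH ε) (𝓝[>] 0) (𝓝 (0 + 0 * _)) :=
      ((continuous_mul_log.tendsto' 0 0 (by simp)).mono_left nhdsWithin_le_nhds).add
        ((tendsto_nhdsWithin_of_tendsto_nhds tendsto_id).mul hδH)
    simpa [σ, mul_add] using h0.const_add (2 * S)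
  have hlim : Tendsto (fun ε => (varentropy (transfer p i j ε) - varentropy p) / ε) (𝓝[>] 0)
      atTop :=
    (((tendsto_log_nhdsGT_zero.atBot_mul_atBot₀
      (tendsto_log_nhdsGT_zero.atBot_add hσ.neg)).atTop_add (hδG.sub (hδH.mul hσ)))).congr'
      (eventually_nhdsWithin_of_forall fun ε hε => (hslope ε hε).symm)
  obtain ⟨ε, hgain, hεj, hε⟩ := ((hlim.eventually_gt_atTop 0).and
    (((eventually_lt_nhds hj).filter_mono nhdsWithin_le_nhds).and self_mem_nhdsWithin)).exists
  have hle : varentropy (transfer p i j ε) ≤ varentropy p :=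
    hmax (transfer_mem_stdSimplex hp hij (by rw [hi, zero_add]; exact hε.le) (by linarith))
  have : (varentropy (transfer p i j ε) - varentropy p) / ε ≤ 0 :=
    div_nonpos_of_nonpos_of_nonneg (by linarith) hε.le
  linarith

end Simplex

lemma eq_or_eq_of_forall_sub_mul_eq_zero {ι : Type*} {x : ι → ℝ} {t : ℝ}
    (h : ∀ i j, (x i - x j) * (x i + x j - t) = 0) {i₀ j₀ : ι} (hi₀ : ∀ k, x k ≤ x i₀)
    (hj₀ : ∀ k, x j₀ ≤ x k) (k : ι) : x k = x i₀ ∨ x k = x j₀ := by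
  have hroot : ∀ k, x k = x i₀ ∨ x k = t - x i₀ := fun k => by
    rcases mul_eq_zero.1 (h k i₀) with h | h
    exacts [.inl (by linarith), .inr (by linarith)]
  rcases hroot j₀ with h₀ | h₀
  · exact .inl (by linarith [hi₀ k, hj₀ k])
  · exact (hroot k).imp_right fun h₁ => h₁.trans h₀.symm

section Maximizers

variable {ι : Type*} [DecidableEq ι] {c r : ℝ}

def peakVec (c r : ℝ) (i₀ : ι) : ι → ℝ := fun k => if k = i₀ then 1 - r else r / c

lemma peakVec_eq_of_mem (i₀ : ι) : ∀ k ∈ ({i₀} : Finset ι), peakVec c r i₀ k = 1 - r := by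
  simp [peakVec]

lemma peakVec_eq_of_notMem (i₀ : ι) : ∀ k ∉ ({i₀} : Finset ι), peakVec c r i₀ k = r / c := by
  simp +contextual [peakVec]

variable [Fintype ι] {p : ι → ℝ}

lemma card_compl_singleton (hcard : (Fintype.card ι : ℝ) = c + 1) (i₀ : ι) :
    ((#({i₀}ᶜ : Finset ι) : ℕ) : ℝ) = c := by
  have h := Finset.card_compl_add_card ({i₀} : Finset ι)
  rw [Finset.card_singleton] at h
  rw [← h, Nat.cast_add] at hcard
  push_cast at hcard
  linarith

lemma peakVec_mem_stdSimplex (hc : 0 < c) (hcard : (Fintype.card ι : ℝ) = c + 1)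
    (hr : r ∈ Icc (0:ℝ) 1) (i₀ : ι) : peakVec c r i₀ ∈ stdSimplex ℝ ι := by
  refine ⟨fun k => ?_, ?_⟩
  · have := hr.1; have := hr.2
    unfold peakVec; split_ifs <;> first | linarith | positivity
  · have h := sum_comp_eq_of_two_level id (peakVec_eq_of_mem (c := c) (r := r) i₀)
      (peakVec_eq_of_notMem i₀)
    simp only [id, card_compl_singleton hcard, Finset.card_singleton, Nat.cast_one] at h
    rw [h]
    field_simp
    ring

lemma varentropy_peakVec (hc : 0 < c) (hcard : (Fintype.card ι : ℝ) = c + 1)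
    (hr : r ∈ Ioo (0:ℝ) 1) (i₀ : ι) :
    varentropy (peakVec c r i₀) = twoLevelVarentropy c r := by
  obtain ⟨hr0, hr1⟩ := hr
  rw [varentropy_eq_of_two_level (peakVec_eq_of_mem i₀) (peakVec_eq_of_notMem i₀)
    (peakVec_mem_stdSimplex hc hcard ⟨hr0.le, hr1.le⟩ i₀).2, card_compl_singleton hcard,
    ← log_div (by linarith) (by positivity), twoLevelVarentropy, scaledLogOdds]
  field_simp
  simp

lemma exists_two_level_of_isMaxOn [Nonempty ι] (hp : p ∈ stdSimplex ℝ ι)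
    (hmax : IsMaxOn varentropy (stdSimplex ℝ ι) p) :
    ∃ (A : Finset ι) (a b : ℝ), A.Nonempty ∧ 0 < b ∧ b ≤ a ∧
      (∀ k ∈ A, p k = a) ∧ ∀ k ∉ A, p k = b := by
  have hpos := pos_of_isMaxOn hp hmax
  obtain ⟨i₀, hi₀⟩ := Finite.exists_max p
  obtain ⟨j₀, hj₀⟩ := Finite.exists_min p
  have htwo : ∀ k, p k = p i₀ ∨ p k = p j₀ := fun k => by
    have h := eq_or_eq_of_forall_sub_mul_eq_zero (x := fun k => log (p k))
      (t := 2 * ∑ k, p k * log (p k) - 2)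
      (fun i j => by linear_combination log_sub_mul_eq_zero_of_isMaxOn hp hmax hpos i j)
      (fun k => log_le_log (hpos k) (hi₀ k)) (fun k => log_le_log (hpos j₀) (hj₀ k)) k
    simpa only [log_injOn_pos.eq_iff (hpos _) (hpos _)] using h
  refine ⟨Finset.univ.filter (p · = p i₀), p i₀, p j₀, ⟨i₀, by simp⟩, hpos j₀, hj₀ i₀,
    fun k hk => (Finset.mem_filter.1 hk).2, fun k hk => (htwo k).resolve_left ?_⟩
  simpa using hk

lemma varentropy_lt_or_eq_peakVec (hc : 1 ≤ c) (hcard : (Fintype.card ι : ℝ) = c + 1)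
    (hp : p ∈ stdSimplex ℝ ι) {A : Finset ι} {a b : ℝ} (hA : A.Nonempty) (hb : 0 < b)
    (hba : b ≤ a) (hpa : ∀ k ∈ A, p k = a) (hpb : ∀ k ∉ A, p k = b) :
    varentropy p < twoLevelVarentropy c (twoLevelArgmax c) ∨
      ∃ i₀, p = peakVec c (twoLevelArgmax c) i₀ := by
  have ha : 0 < a := hb.trans_le hba
  have hmass : #A * a + #Aᶜ * b = 1 := by
    simpa using (sum_comp_eq_of_two_level id hpa hpb).symm.trans hp.2
  have hcards : (#Aᶜ : ℝ) + #A = c + 1 := by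
    rw [← hcard]; exact_mod_cast Finset.card_compl_add_card A
  have hA1 : (1:ℝ) ≤ #A := by exact_mod_cast hA.card_pos
  -- the level `b` carries mass `s = #Aᶜ b`, and `a / b ≤ (1 - s) / s * c` as `#Aᶜ ≤ c ≤ #A c`
  have hB : (#Aᶜ : ℝ) ≤ #A * c := by nlinarith
  have hsu : #Aᶜ * b * (a / b) ≤ (1 - #Aᶜ * b) * c := by
    rw [mul_assoc, mul_div_cancel₀ a hb.ne', ← hmass]
    linear_combination a * hB
  rcases mul_one_sub_mul_log_sq_lt_or_eq hc (by positivity) (by nlinarith)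
    ((one_le_div hb).2 hba) hsu with hlt | ⟨hs, hsu⟩
  · left
    calc varentropy p = #Aᶜ * b * (1 - #Aᶜ * b) * log (a / b) ^ 2 := by
          rw [varentropy_eq_of_two_level hpa hpb hp.2, log_div ha.ne' hb.ne', ← hmass]; ring
      _ < _ := hlt
  · right
    rw [mul_assoc, mul_div_cancel₀ a hb.ne', ← hmass] at hsu
    have hBc : (#Aᶜ : ℝ) = #A * c := mul_right_cancel₀ ha.ne' (by linear_combination hsu)
    have hcardA : (#A : ℝ) = 1 := by
      have h : ((#A : ℝ) - 1) * (c + 1) = 0 := by linear_combination hcards - hBc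
      linarith [(mul_eq_zero.1 h).resolve_right (by linarith)]
    rw [hcardA, one_mul] at hBc
    rw [hcardA, hBc] at hmass
    rw [hBc] at hs
    obtain ⟨i₀, rfl⟩ := Finset.card_eq_one.1 (by exact_mod_cast hcardA)
    refine ⟨i₀, funext fun k => ?_⟩
    by_cases hk : k = i₀
    · rw [hpa k (by simpa using hk), peakVec_eq_of_mem i₀ k (by simpa using hk)]
      linarith
    · rw [hpb k (by simpa using hk), peakVec_eq_of_notMem i₀ k (by simpa using hk), ← hs]
      field_simp

lemma eq_peakVec_of_isMaxOn [Nonempty ι] (hc : 1 ≤ c) (hcard : (Fintype.card ι : ℝ) = c + 1)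
    (hp : p ∈ stdSimplex ℝ ι) (hmax : IsMaxOn varentropy (stdSimplex ℝ ι) p) :
    ∃ i₀, p = peakVec c (twoLevelArgmax c) i₀ := by
  obtain ⟨i₀⟩ := ‹Nonempty ι›
  obtain ⟨A, a, b, hA, hb, hba, hpa, hpb⟩ := exists_two_level_of_isMaxOn hp hmax
  have hle : twoLevelVarentropy c (twoLevelArgmax c) ≤ varentropy p :=
    (varentropy_peakVec (by linarith) hcard (twoLevelArgmax_mem_Ioo_zero_one hc) i₀).symm.trans_le
      (hmax (peakVec_mem_stdSimplex (by linarith) hcard (Ioo_subset_Icc_self (twoLevelArgmax_mem_Ioo_zero_one hc)) i₀))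
  exact (varentropy_lt_or_eq_peakVec hc hcard hp hA hb hba hpa hpb).resolve_left hle.not_gt

lemma varentropy_le [Nonempty ι] (hc : 1 ≤ c) (hcard : (Fintype.card ι : ℝ) = c + 1)
    (hp : p ∈ stdSimplex ℝ ι) : varentropy p ≤ twoLevelVarentropy c (twoLevelArgmax c) := by
  obtain ⟨q, hq, hmax⟩ := exists_isMaxOn_varentropy (ι := ι)
  obtain ⟨i₀, rfl⟩ := eq_peakVec_of_isMaxOn hc hcard hq hmax
  exact (hmax hp).trans_eq (varentropy_peakVec (by linarith) hcard (twoLevelArgmax_mem_Ioo_zero_one hc) i₀)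

lemma varentropy_eq_iff [Nonempty ι] (hc : 1 ≤ c) (hcard : (Fintype.card ι : ℝ) = c + 1)
    (hp : p ∈ stdSimplex ℝ ι) :
    varentropy p = twoLevelVarentropy c (twoLevelArgmax c) ↔
      ∃ i₀, p = peakVec c (twoLevelArgmax c) i₀ := by
  refine ⟨fun h => eq_peakVec_of_isMaxOn hc hcard hp fun q hq => ?_, ?_⟩
  · exact (varentropy_le hc hcard hq).trans h.ge
  · rintro ⟨i₀, rfl⟩
    exact varentropy_peakVec (by linarith) hcard (twoLevelArgmax_mem_Ioo_zero_one hc) i₀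

end Maximizers

end Varentropy

lemma Fin.exists_perm_ite_val_eq_zero_iff {d : ℕ} [NeZero d] {α : Type*} (p : Fin d → α)
    (x y : α) :
    (∃ e : Equiv.Perm (Fin d), ∀ i, p i = if ((e i : Fin d) : ℕ) = 0 then x else y) ↔
      ∃ i₀, ∀ i, p i = if i = i₀ then x else y := by
  have key : ∀ (e : Equiv.Perm (Fin d)) i, ((e i : Fin d) : ℕ) = 0 ↔ i = e.symm 0 := fun e i => by
    rw [← Fin.val_zero d, Fin.val_inj, Equiv.eq_symm_apply]
  refine ⟨fun ⟨e, he⟩ => ⟨e.symm 0, fun i => by simpa only [key] using he i⟩,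
    fun ⟨i₀, h⟩ => ⟨Equiv.swap i₀ 0, fun i => ?_⟩⟩
  simpa only [key, Equiv.symm_swap, Equiv.swap_apply_right] using h i

open Varentropy

/-- the unique maximizer `r_d` of `N(d)`, its characterizing equation, and
the equality cases of the surprisal-variance bound. -/
theorem surprisal_variance_eq_iff (d : ℕ) (hd : 2 ≤ d) :
    ∃ rd : ℝ, rd ∈ Set.Ioo (0:ℝ) (1/2) ∧
      rd * (1 - rd) * (Real.log ((1 - rd) / rd * ((d:ℝ) - 1)))^2 = Nfun d ∧
      (∀ r ∈ Set.Ioo (0:ℝ) (1/2),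
        r * (1 - r) * (Real.log ((1 - r) / r * ((d:ℝ) - 1)))^2 = Nfun d → r = rd) ∧
      (1 - 2 * rd) * Real.log ((1 - rd) / rd * ((d:ℝ) - 1)) = 2 ∧
      (∀ r ∈ Set.Ioo (0:ℝ) (1/2),
        (1 - 2 * r) * Real.log ((1 - r) / r * ((d:ℝ) - 1)) = 2 → r = rd) ∧
      (∀ p : Fin d → ℝ, (∀ i, 0 ≤ p i) → ∑ i, p i = 1 →
        ((∑ i, p i * (Real.log (p i))^2 - (∑ i, p i * Real.log (p i))^2) = Nfun d ↔
          ∃ e : Equiv.Perm (Fin d), ∀ i,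
            p i = if ((e i : Fin d) : ℕ) = 0 then 1 - rd else rd / ((d:ℝ) - 1))) := by
  have hc : (1:ℝ) ≤ d - 1 := by
    have : (2:ℝ) ≤ d := by exact_mod_cast hd
    linarith
  have hcard : (Fintype.card (Fin d) : ℝ) = (d - 1) + 1 := by simp
  have : NeZero d := ⟨by omega⟩
  obtain ⟨hrd, hcrit⟩ := twoLevelArgmax_spec hc
  have hN := Nfun_eq_twoLevelVarentropy hc
  refine ⟨_, hrd, hN.symm, fun r hr h => ?_, hcrit, fun r hr h => ?_, fun p hp0 hp1 => ?_⟩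
  · by_contra hne
    exact (twoLevelVarentropy_lt_twoLevelArgmax hc (Ioo_subset_Ioc_self hr) hne).ne (h.trans hN)
  · exact (strictAntiOn_mul_scaledLogOdds hc).injOn (Ioo_subset_Ioc_self hr)
      (Ioo_subset_Ioc_self hrd) (h.trans hcrit.symm)
  · rw [hN, Fin.exists_perm_ite_val_eq_zero_iff]
    exact (varentropy_eq_iff hc hcard ⟨hp0, hp1⟩).trans (exists_congr fun _ => funext_iff)

end
end
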